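/- arXiv:1306.5578 — 6 statements merged into one kernel-verified Lean document; each statement's English description precedes it below -/
import Mathlib

section
/- For every integer m ≥ 3, the Sperner systems U^{2m+2}_1 and U^{2m+2}_2 over E_m ∪ {0, 0'} are strongly hypomorphic: for every two-element subset I of E_m ∪ {0, 0'}, the Sperner systems (U^{2m+2}_1)*_I and (U^{2m+2}_2)*_I are isomorphic. -/
section SetSystems

variable {α β : Type*}

/-- A family of finite sets is a Sperner system (an antichain under inclusion). -/
def IsSperner [DecidableEq α] (F : Finset (Finset α)) : Prop :=
  ∀ S ∈ F, ∀ T ∈ F, S ⊆ T → S = T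

/-- Isomorphism of set systems with the given ground sets: a bijection `σ` of the
ground set `A` onto the ground set `B` mapping the family `F` onto the family `G`. -/
def SystemIso [DecidableEq α] [DecidableEq β] (A : Finset α) (F : Finset (Finset α))
    (B : Finset β) (G : Finset (Finset β)) : Prop :=
  ∃ σ : α → β, Set.BijOn σ ↑A ↑B ∧ F.image (fun S => S.image σ) = G

/-- Identification of `v` with `u` inside a block: `S_I = (S ∖ {v}) ∪ {u}` if `v ∈ S`,
and `S_I = S` otherwise. -/
def identifyBlock [DecidableEq α] (u v : α) (S : Finset α) : Finset α :=
  if v ∈ S then insert u (S.erase v) else S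

/-- The identified system `𝒜_I` for `I = {u, v}` (with `u` the kept representative). -/
def identifySystem [DecidableEq α] (u v : α) (F : Finset (Finset α)) : Finset (Finset α) :=
  F.image (identifyBlock u v)

/-- The minimal members of a family with respect to inclusion. -/
def minimals [DecidableEq α] (F : Finset (Finset α)) : Finset (Finset α) :=
  F.filter (fun S => ∀ T ∈ F, T ⊆ S → T = S)

/-- `𝒜*_I`: the Sperner system of minimal members of the identified system. -/
def starMinor [DecidableEq α] (u v : α) (F : Finset (Finset α)) : Finset (Finset α) :=
  minimals (identifySystem u v F)

/-- Strong hypomorphism: for every two-element subset `I = {u, v}` of the ground set `A`,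
the systems `F*_I` and `G*_I` (both over `A ∖ {v}`) are isomorphic. -/
def StronglyHypomorphic [DecidableEq α] (A : Finset α) (F G : Finset (Finset α)) : Prop :=
  ∀ u ∈ A, ∀ v ∈ A, u ≠ v →
    SystemIso (A.erase v) (starMinor u v F) (A.erase v) (starMinor u v G)

/-- Hypomorphism: a bijection `φ` of the two-element subsets of the ground set `A`
such that `F*_I` is isomorphic to `G*_{φ I}` for every two-element subset `I`. -/
def Hypomorphic [DecidableEq α] (A : Finset α) (F G : Finset (Finset α)) : Prop :=
  ∃ φ : {P : Finset α // P ∈ A.powersetCard 2} ≃ {P : Finset α // P ∈ A.powersetCard 2},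
    ∀ (P : {P : Finset α // P ∈ A.powersetCard 2}) (u v u' v' : α),
      u ≠ v → (P : Finset α) = {u, v} → u' ≠ v' → ((φ P : Finset α)) = {u', v'} →
      SystemIso (A.erase v) (starMinor u v F) (A.erase v') (starMinor u' v' G)

end SetSystems

/-- The ground set `E_m`: two disjoint copies of `{1, …, m}` (modelled as `ZMod m`);
`Sum.inl i` is the unprimed element `i` and `Sum.inr i` is the primed element `i'`. -/
abbrev Em (m : ℕ) := ZMod m ⊕ ZMod m

/-- `A^m_J = J ∪ ({1,…,m} ∖ J)'`. -/
def AJ (m : ℕ) [NeZero m] (J : Finset (ZMod m)) : Finset (Em m) :=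
  J.image Sum.inl ∪ Jᶜ.image Sum.inr

/-- `G^m_1 = {A^m_J : J ⊆ {1,…,m}, |J| odd}`. -/
def G1 (m : ℕ) [NeZero m] : Finset (Finset (Em m)) :=
  ((Finset.univ : Finset (ZMod m)).powerset.filter fun J => Odd J.card).image (AJ m)

/-- `G^m_2 = {A^m_J : J ⊆ {1,…,m}, |J| even}`. -/
def G2 (m : ℕ) [NeZero m] : Finset (Finset (Em m)) :=
  ((Finset.univ : Finset (ZMod m)).powerset.filter fun J => Even J.card).image (AJ m)

/-- `F^m_p = E_m ∖ {p, p', (p+1)'}`. -/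
def Fblock (m : ℕ) [NeZero m] (p : ZMod m) : Finset (Em m) :=
  Finset.univ \ {Sum.inl p, Sum.inr p, Sum.inr (p + 1)}

/-- `F^m = {F^m_p : p ∈ {1,…,m}}`. -/
def Fsys (m : ℕ) [NeZero m] : Finset (Finset (Em m)) :=
  Finset.univ.image (Fblock m)

/-- `ℳ^m_1 = G^m_1 ∪ F^m`. -/
def M1 (m : ℕ) [NeZero m] : Finset (Finset (Em m)) := G1 m ∪ Fsys m

/-- `ℳ^m_2 = G^m_2 ∪ F^m`. -/
def M2 (m : ℕ) [NeZero m] : Finset (Finset (Em m)) := G2 m ∪ Fsys m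

/-- `U^{2m+1}_i = {S ∪ {0} : S ∈ F}` over `E_m ∪ {0}`, where the new element `0`
is modelled by `none : Option (Em m)`. -/
def Usmall (m : ℕ) [NeZero m] (F : Finset (Finset (Em m))) :
    Finset (Finset (Option (Em m))) :=
  F.image fun S => insert none (S.image some)

/-- `U^{2m+2}_i = {S ∪ {0} : S ∈ F} ∪ {{0, 0'}}` over `E_m ∪ {0, 0'}`, where the new
elements `0` and `0'` are modelled by `Sum.inr false` and `Sum.inr true`. -/
def Ubig (m : ℕ) [NeZero m] (F : Finset (Finset (Em m))) :
    Finset (Finset (Em m ⊕ Bool)) :=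
  (F.image fun S => insert (Sum.inr false) (S.image Sum.inl)) ∪
    {({Sum.inr false, Sum.inr true} : Finset (Em m ⊕ Bool))}

section Aux1

variable {α β : Type*} [DecidableEq α] [DecidableEq β]

lemma mem_identifyBlock {u v : α} {S : Finset α} {x : α} :
    x ∈ identifyBlock u v S ↔ ((x = u ∧ v ∈ S) ∨ (x ∈ S ∧ x ≠ v)) := by
  unfold identifyBlock
  split_ifs with hv
  · simp only [Finset.mem_insert, Finset.mem_erase, hv, and_true]
    tauto
  · constructor
    · intro hx
      exact Or.inr ⟨hx, fun h => hv (h ▸ hx)⟩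
    · rintro (⟨_, h⟩ | ⟨hx, _⟩)
      · exact absurd h hv
      · exact hx

lemma minimals_insert {D : Finset (Finset α)} {a : Finset α}
    (h : ∃ T ∈ D, T ⊆ a) : minimals (insert a D) = minimals D := by
  obtain ⟨T, hT, hTa⟩ := h
  ext S
  simp only [minimals, Finset.mem_filter, Finset.mem_insert]
  constructor
  · rintro ⟨hS | hS, hmin⟩
    · subst hS
      have hTS := hmin T (Or.inr hT) hTa
      subst hTS
      exact ⟨hT, fun T' hT' h' => hmin T' (Or.inr hT') h'⟩
    · exact ⟨hS, fun T' hT' h' => hmin T' (Or.inr hT') h'⟩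
  · rintro ⟨hS, hmin⟩
    refine ⟨Or.inr hS, ?_⟩
    rintro T' (rfl | hT') h'
    · have hTS := hmin T hT (hTa.trans h')
      subst hTS
      exact subset_antisymm h' hTa
    · exact hmin T' hT' h'

lemma identifyBlock_image {f : α → β} (hf : Function.Injective f) (u v : α) (S : Finset α) :
    (identifyBlock u v S).image f = identifyBlock (f u) (f v) (S.image f) := by
  unfold identifyBlock
  by_cases hv : v ∈ S
  · rw [if_pos hv, if_pos (Finset.mem_image_of_mem f hv), Finset.image_insert,
      Finset.image_erase hf]
  · rw [if_neg hv, if_neg (fun h => hv (hf.mem_finset_image.mp h))]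

lemma identifySystem_image {f : α → β} (hf : Function.Injective f) (u v : α)
    (F : Finset (Finset α)) :
    (identifySystem u v F).image (Finset.image f)
      = identifySystem (f u) (f v) (F.image (Finset.image f)) := by
  unfold identifySystem
  rw [Finset.image_image, Finset.image_image]
  exact Finset.image_congr fun S _ => identifyBlock_image hf u v S

lemma minimals_image {f : α → β} (hf : Function.Injective f) (F : Finset (Finset α)) :
    (minimals F).image (Finset.image f) = minimals (F.image (Finset.image f)) := by
  ext X
  simp only [minimals, Finset.mem_filter, Finset.mem_image]
  constructor
  · rintro ⟨S, ⟨hS, hmin⟩, rfl⟩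
    refine ⟨⟨S, hS, rfl⟩, ?_⟩
    rintro T ⟨T', hT', rfl⟩ hsub
    rw [hmin T' hT' ((Finset.image_subset_image_iff hf).mp hsub)]
  · rintro ⟨⟨S, hS, rfl⟩, hmin⟩
    refine ⟨S, ⟨hS, ?_⟩, rfl⟩
    intro T hT hsub
    exact (Finset.image_injective hf)
      (hmin (T.image f) ⟨T, hT, rfl⟩ (Finset.image_subset_image hsub))

lemma starMinor_image {f : α → β} (hf : Function.Injective f) (u v : α)
    (F : Finset (Finset α)) :
    (starMinor u v F).image (Finset.image f)
      = minimals (identifySystem (f u) (f v) (F.image (Finset.image f))) := by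
  unfold starMinor
  rw [minimals_image hf, identifySystem_image hf]

lemma identifySystem_insert (u v : α) (S : Finset α) (F : Finset (Finset α)) :
    identifySystem u v (insert S F) = insert (identifyBlock u v S) (identifySystem u v F) :=
  Finset.image_insert _ _ _

lemma identifyBlock_mono (u v : α) {S T : Finset α} (h : S ⊆ T) :
    identifyBlock u v S ⊆ identifyBlock u v T := by
  intro x hx
  rw [mem_identifyBlock] at hx ⊢
  rcases hx with ⟨rfl, hv⟩ | ⟨hx, hne⟩
  · exact Or.inl ⟨rfl, h hv⟩
  · exact Or.inr ⟨h hx, hne⟩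

end Aux1

section Aux2

open Finset

variable (m : ℕ) [NeZero m]

/-- The primed/unprimed swap at index `k`. -/
def tauk (k : ZMod m) : Em m ≃ Em m := Equiv.swap (Sum.inl k) (Sum.inr k)

/-- The extension of `tauk` to the big ground set. -/
def sigk (k : ZMod m) : (Em m ⊕ Bool) ≃ (Em m ⊕ Bool) :=
  Equiv.sumCongr (tauk m k) (Equiv.refl Bool)

/-- The image of `F_{k-1}` under `tauk k`. -/
def Hset (k : ZMod m) : Finset (Em m) :=
  Finset.univ \ {Sum.inl (k-1), Sum.inr (k-1), Sum.inl k}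

/-- toggling membership of `k`. -/
def tog (k : ZMod m) (J : Finset (ZMod m)) : Finset (ZMod m) :=
  if k ∈ J then J.erase k else insert k J

/-- the blow-up of a block of `M` to a block of `U`. -/
def bigB (S : Finset (Em m)) : Finset (Em m ⊕ Bool) :=
  insert (Sum.inr false) (S.image Sum.inl)

@[simp] lemma mem_AJ_inl {J : Finset (ZMod m)} {j : ZMod m} :
    Sum.inl j ∈ AJ m J ↔ j ∈ J := by simp [AJ]

@[simp] lemma mem_AJ_inr {J : Finset (ZMod m)} {j : ZMod m} :
    Sum.inr j ∈ AJ m J ↔ j ∉ J := by simp [AJ]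

@[simp] lemma mem_Fblock {p : ZMod m} {x : Em m} :
    x ∈ Fblock m p ↔ (x ≠ Sum.inl p ∧ x ≠ Sum.inr p ∧ x ≠ Sum.inr (p+1)) := by
  simp only [Fblock, Finset.mem_sdiff, Finset.mem_univ, true_and, Finset.mem_insert,
    Finset.mem_singleton]
  tauto

@[simp] lemma mem_Hset {k : ZMod m} {x : Em m} :
    x ∈ Hset m k ↔ (x ≠ Sum.inl (k-1) ∧ x ≠ Sum.inr (k-1) ∧ x ≠ Sum.inl k) := by
  simp only [Hset, Finset.mem_sdiff, Finset.mem_univ, true_and, Finset.mem_insert,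
    Finset.mem_singleton]
  tauto

lemma odd_tog_card_iff (k : ZMod m) (J : Finset (ZMod m)) :
    Odd (tog m k J).card ↔ Even J.card := by
  unfold tog
  rw [Nat.odd_iff, Nat.even_iff]
  split_ifs with h
  · rw [Finset.card_erase_of_mem h]
    have : 1 ≤ J.card := Finset.card_pos.mpr ⟨k, h⟩
    omega
  · rw [Finset.card_insert_of_notMem h]
    omega

lemma even_tog_card_iff (k : ZMod m) (J : Finset (ZMod m)) :
    Even (tog m k J).card ↔ Odd J.card := by
  unfold tog
  rw [Nat.odd_iff, Nat.even_iff]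
  split_ifs with h
  · rw [Finset.card_erase_of_mem h]
    have : 1 ≤ J.card := Finset.card_pos.mpr ⟨k, h⟩
    omega
  · rw [Finset.card_insert_of_notMem h]
    omega

lemma tog_tog (k : ZMod m) (J : Finset (ZMod m)) : tog m k (tog m k J) = J := by
  by_cases h : k ∈ J
  · simp [tog, h, Finset.notMem_erase, Finset.insert_erase h]
  · simp [tog, h, Finset.erase_insert h]

lemma togImage (k : ZMod m) :
    ((Finset.univ.powerset.filter fun J : Finset (ZMod m) => Odd J.card).image (tog m k))
      = Finset.univ.powerset.filter fun J => Even J.card := by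
  ext K
  simp only [Finset.mem_image, Finset.mem_filter, Finset.mem_powerset, Finset.subset_univ,
    true_and]
  constructor
  · rintro ⟨J, hodd, rfl⟩
    exact (even_tog_card_iff m k J).mpr hodd
  · intro heven
    exact ⟨tog m k K, (odd_tog_card_iff m k K).mpr heven, tog_tog m k K⟩

lemma image_parity {β : Type*} [DecidableEq β] (k : ZMod m) (e : Finset (ZMod m) → β)
    (he : ∀ J, e (tog m k J) = e J) :
    ((Finset.univ.powerset.filter fun J : Finset (ZMod m) => Odd J.card).image e)
      = (Finset.univ.powerset.filter fun J => Even J.card).image e := by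
  have h1 : ((Finset.univ.powerset.filter fun J : Finset (ZMod m) => Odd J.card).image e)
      = (((Finset.univ.powerset.filter fun J : Finset (ZMod m) => Odd J.card)).image
          (tog m k)).image e := by
    rw [Finset.image_image]
    exact Finset.image_congr fun J _ => (he J).symm
  rw [h1, togImage]

end Aux2

section Aux3

set_option linter.unusedSectionVars false

open Finset

variable (m : ℕ) [NeZero m]

lemma finset_mem_image_equiv {α β : Type*} [DecidableEq β] {s : Finset α} (e : α ≃ β)
    {x : β} : x ∈ s.image e ↔ e.symm x ∈ s := by
  simp only [Finset.mem_image]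
  constructor
  · rintro ⟨a, ha, rfl⟩
    simpa using ha
  · intro h
    exact ⟨e.symm x, h, by simp⟩

lemma zmod_one_ne (hm : 3 ≤ m) : (1 : ZMod m) ≠ 0 := by
  haveI : Fact (1 < m) := ⟨by omega⟩
  exact one_ne_zero

lemma zmod_two_ne (hm : 3 ≤ m) : (2 : ZMod m) ≠ 0 := by
  intro h
  have : ((2 : ℕ) : ZMod m) = 0 := by exact_mod_cast h
  rw [ZMod.natCast_eq_zero_iff] at this
  exact absurd (Nat.le_of_dvd (by norm_num) this) (by omega)

lemma tauk_symm (k : ZMod m) : (tauk m k).symm = tauk m k := Equiv.symm_swap _ _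

lemma tauk_inl {k j : ZMod m} (h : j ≠ k) : tauk m k (Sum.inl j) = Sum.inl j :=
  Equiv.swap_apply_of_ne_of_ne (by simp [h]) (by simp)

lemma tauk_inr {k j : ZMod m} (h : j ≠ k) : tauk m k (Sum.inr j) = Sum.inr j :=
  Equiv.swap_apply_of_ne_of_ne (by simp) (by simp [h])

lemma tauk_inl_k (k : ZMod m) : tauk m k (Sum.inl k) = Sum.inr k :=
  Equiv.swap_apply_left _ _

lemma tauk_inr_k (k : ZMod m) : tauk m k (Sum.inr k) = Sum.inl k :=
  Equiv.swap_apply_right _ _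

lemma AJ_tauk (k : ZMod m) (J : Finset (ZMod m)) :
    (AJ m J).image (tauk m k) = AJ m (tog m k J) := by
  ext x
  rw [finset_mem_image_equiv (tauk m k), tauk_symm]
  rcases x with j | j
  · by_cases hj : j = k
    · subst hj
      rw [tauk_inl_k]
      simp only [mem_AJ_inr, mem_AJ_inl, tog]
      split_ifs with h <;> simp [h]
    · rw [tauk_inl m hj]
      simp only [mem_AJ_inl, tog]
      split_ifs with h <;> simp [Finset.mem_erase, Finset.mem_insert, hj]
  · by_cases hj : j = k
    · subst hj
      rw [tauk_inr_k]
      simp only [mem_AJ_inl, mem_AJ_inr, tog]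
      split_ifs with h <;> simp [h]
    · rw [tauk_inr m hj]
      simp only [mem_AJ_inr, tog]
      split_ifs with h <;> simp [Finset.mem_erase, Finset.mem_insert, hj]

lemma Fblock_tauk (hm : 3 ≤ m) (k p : ZMod m) :
    (Fblock m p).image (tauk m k) = if p = k - 1 then Hset m k else Fblock m p := by
  have h1 : (1 : ZMod m) ≠ 0 := zmod_one_ne m hm
  have hmem : ∀ x : Em m, x ∈ (Fblock m p).image (tauk m k) ↔
      (x ≠ tauk m k (Sum.inl p) ∧ x ≠ tauk m k (Sum.inr p) ∧ x ≠ tauk m k (Sum.inr (p+1))) := by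
    intro x
    rw [finset_mem_image_equiv (tauk m k), mem_Fblock]
    simp only [ne_eq, Equiv.symm_apply_eq]
  have hkk : k - 1 ≠ k := fun h => h1 (sub_eq_self.mp h)
  split_ifs with hp
  · subst hp
    ext x
    rw [hmem, mem_Hset, tauk_inl m hkk, tauk_inr m hkk, show (k - 1 + 1 : ZMod m) = k by ring,
      tauk_inr_k]
  · by_cases hpk : p = k
    · subst hpk
      have hp1 : p + 1 ≠ p := fun h => h1 (by simpa using add_eq_left.mp h)
      ext x
      rw [hmem, mem_Fblock, tauk_inl_k, tauk_inr_k, tauk_inr m hp1]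
      tauto
    · have hp1 : p + 1 ≠ k := fun h => hp (by rw [← h]; ring)
      ext x
      rw [hmem, mem_Fblock, tauk_inl m hpk, tauk_inr m hpk, tauk_inr m hp1]

end Aux3


section Aux4

set_option linter.unusedSectionVars false

open Finset

variable (m : ℕ) [NeZero m]

lemma G1_tauk (k : ZMod m) : (G1 m).image (Finset.image (tauk m k)) = G2 m := by
  unfold G1 G2
  rw [Finset.image_image]
  have h2 : (Finset.univ.powerset.filter fun J : Finset (ZMod m) => Odd J.card).image
      (Finset.image (tauk m k) ∘ AJ m)
      = (Finset.univ.powerset.filter fun J : Finset (ZMod m) => Odd J.card).image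
        (fun J => AJ m (tog m k J)) :=
    Finset.image_congr fun J _ => AJ_tauk m k J
  rw [h2, show (fun J => AJ m (tog m k J)) = (AJ m ∘ tog m k) from rfl,
    ← Finset.image_image, togImage]

lemma Fsys_tauk (hm : 3 ≤ m) (k : ZMod m) :
    insert (Fblock m (k-1)) ((Fsys m).image (Finset.image (tauk m k)))
      = insert (Hset m k) (Fsys m) := by
  unfold Fsys
  rw [Finset.image_image]
  ext X
  simp only [Finset.mem_insert, Finset.mem_image, Finset.mem_univ, true_and,
    Function.comp_apply]
  constructor
  · rintro (rfl | ⟨p, rfl⟩)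
    · exact Or.inr ⟨k-1, rfl⟩
    · rw [Fblock_tauk m hm k p]
      split_ifs with h
      · exact Or.inl rfl
      · exact Or.inr ⟨p, rfl⟩
  · rintro (rfl | ⟨p, rfl⟩)
    · refine Or.inr ⟨k-1, ?_⟩
      rw [Fblock_tauk m hm k (k-1), if_pos rfl]
    · by_cases h : p = k-1
      · subst h
        exact Or.inl rfl
      · refine Or.inr ⟨p, ?_⟩
        rw [Fblock_tauk m hm k p, if_neg h]

lemma M1_tauk (hm : 3 ≤ m) (k : ZMod m) :
    insert (Fblock m (k-1)) ((M1 m).image (Finset.image (tauk m k)))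
      = insert (Hset m k) (M2 m) := by
  unfold M1 M2
  rw [Finset.image_union, G1_tauk, ← Finset.union_insert, Fsys_tauk m hm,
    Finset.union_insert]

lemma Ubig_insert (S : Finset (Em m)) (F : Finset (Finset (Em m))) :
    Ubig m (insert S F) = insert (bigB m S) (Ubig m F) := by
  unfold Ubig bigB
  rw [Finset.image_insert, Finset.insert_union]

@[simp] lemma sigk_inl (k : ZMod m) (x : Em m) :
    sigk m k (Sum.inl x) = Sum.inl (tauk m k x) := rfl

@[simp] lemma sigk_inr (k : ZMod m) (b : Bool) :
    sigk m k (Sum.inr b) = Sum.inr b := rfl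

lemma Ubig_image (k : ZMod m) (F : Finset (Finset (Em m))) :
    (Ubig m F).image (Finset.image (sigk m k))
      = Ubig m (F.image (Finset.image (tauk m k))) := by
  unfold Ubig
  rw [Finset.image_union, Finset.image_image, Finset.image_image]
  have h1 : (F.image fun S => ((insert (Sum.inr false) (S.image Sum.inl)).image (sigk m k) : Finset (Em m ⊕ Bool)))
      = F.image fun S => insert (Sum.inr false) (((S.image (tauk m k)).image Sum.inl)) := by
    apply Finset.image_congr
    intro S _
    simp only [Finset.image_insert, sigk_inr, Finset.image_image]
    rfl
  have h2 : (({({Sum.inr false, Sum.inr true} : Finset (Em m ⊕ Bool))} : Finset (Finset (Em m ⊕ Bool))).image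
      (Finset.image (sigk m k))) = {({Sum.inr false, Sum.inr true} : Finset (Em m ⊕ Bool))} := by
    simp
  exact congrArg₂ Union.union h1 h2

end Aux4

section Aux5

set_option linter.unusedSectionVars false

open Finset

variable (m : ℕ) [NeZero m]

lemma mem_identifySystem {α : Type*} [DecidableEq α] {u v : α} {F : Finset (Finset α)}
    {S : Finset α} (h : S ∈ F) : identifyBlock u v S ∈ identifySystem u v F :=
  Finset.mem_image_of_mem _ h

lemma two_mem_Ubig (F : Finset (Finset (Em m))) :
    ({Sum.inr false, Sum.inr true} : Finset (Em m ⊕ Bool)) ∈ Ubig m F := by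
  unfold Ubig
  simp

lemma bigB_mem_Ubig {S : Finset (Em m)} {F : Finset (Finset (Em m))} (h : S ∈ F) :
    bigB m S ∈ Ubig m F := by
  unfold Ubig bigB
  exact Finset.mem_union_left _ (Finset.mem_image_of_mem _ h)

lemma AJ_mem_G2 {J : Finset (ZMod m)} (h : Even J.card) : AJ m J ∈ G2 m := by
  unfold G2
  exact Finset.mem_image_of_mem _ (by simp [h])

lemma AJ_mem_M2 {J : Finset (ZMod m)} (h : Even J.card) : AJ m J ∈ M2 m :=
  Finset.mem_union_left _ (AJ_mem_G2 m h)

lemma AJ_mem_tauM1 (k : ZMod m) {J : Finset (ZMod m)} (h : Even J.card) :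
    AJ m J ∈ (M1 m).image (Finset.image (tauk m k)) := by
  unfold M1
  rw [Finset.image_union, G1_tauk]
  exact Finset.mem_union_left _ (AJ_mem_G2 m h)

/-- Allowed forms of domination witnesses. -/
def WForm (u v : Em m ⊕ Bool) (W : Finset (Em m ⊕ Bool)) : Prop :=
  W = identifyBlock u v ({Sum.inr false, Sum.inr true}) ∨
    ∃ J : Finset (ZMod m), Even J.card ∧ W = identifyBlock u v (bigB m (AJ m J))

lemma WForm_mem_D2 {u v : Em m ⊕ Bool} {W : Finset (Em m ⊕ Bool)} (h : WForm m u v W) :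
    W ∈ identifySystem u v (Ubig m (M2 m)) := by
  rcases h with rfl | ⟨J, hJ, rfl⟩
  · exact mem_identifySystem (two_mem_Ubig m _)
  · exact mem_identifySystem (bigB_mem_Ubig m (AJ_mem_M2 m hJ))

lemma WForm_mem_D1 (k : ZMod m) {u v : Em m ⊕ Bool} {W : Finset (Em m ⊕ Bool)}
    (h : WForm m u v W) :
    W ∈ identifySystem u v (Ubig m ((M1 m).image (Finset.image (tauk m k)))) := by
  rcases h with rfl | ⟨J, hJ, rfl⟩
  · exact mem_identifySystem (two_mem_Ubig m _)
  · exact mem_identifySystem (bigB_mem_Ubig m (AJ_mem_tauM1 m k hJ))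

lemma bijOn_erase {α : Type*} [DecidableEq α] [Fintype α] (e : α ≃ α) (v : α) (hv : e v = v) :
    Set.BijOn e ↑(Finset.univ.erase v) ↑(Finset.univ.erase v) := by
  have hs : (↑(Finset.univ.erase v) : Set α) = {v}ᶜ := by
    ext x
    simp [Finset.mem_erase]
  rw [hs]
  refine ⟨fun x hx => ?_, e.injective.injOn, fun y hy => ⟨e.symm y, ?_, by simp⟩⟩
  · simp only [Set.mem_compl_iff, Set.mem_singleton_iff] at *
    exact fun h => hx (e.injective (by rw [h, hv]))
  · simp only [Set.mem_compl_iff, Set.mem_singleton_iff] at *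
    intro h
    exact hy (by rw [← Equiv.apply_symm_apply e y, h, hv])

lemma key (hm : 3 ≤ m) (u v : Em m ⊕ Bool) (k : ZMod m)
    (hu : sigk m k u = u) (hv : sigk m k v = v)
    (Wa Wb : Finset (Em m ⊕ Bool)) (hWa : WForm m u v Wa) (hWb : WForm m u v Wb)
    (ha : Wa ⊆ identifyBlock u v (bigB m (Fblock m (k-1))))
    (hb : Wb ⊆ identifyBlock u v (bigB m (Hset m k))) :
    SystemIso (Finset.univ.erase v) (starMinor u v (Ubig m (M1 m)))
      (Finset.univ.erase v) (starMinor u v (Ubig m (M2 m))) := by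
  refine ⟨sigk m k, bijOn_erase (sigk m k) v hv, ?_⟩
  show (starMinor u v (Ubig m (M1 m))).image (Finset.image (sigk m k))
      = starMinor u v (Ubig m (M2 m))
  rw [starMinor_image (sigk m k).injective, hu, hv, Ubig_image]
  have hins : insert (identifyBlock u v (bigB m (Fblock m (k-1))))
      (identifySystem u v (Ubig m ((M1 m).image (Finset.image (tauk m k)))))
      = insert (identifyBlock u v (bigB m (Hset m k)))
        (identifySystem u v (Ubig m (M2 m))) := by
    rw [← identifySystem_insert, ← identifySystem_insert, ← Ubig_insert, ← Ubig_insert,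
      M1_tauk m hm k]
  show minimals (identifySystem u v (Ubig m ((M1 m).image (Finset.image (tauk m k)))))
      = starMinor u v (Ubig m (M2 m))
  unfold starMinor
  rw [← minimals_insert ⟨Wa, WForm_mem_D1 m k hWa, ha⟩, hins,
    minimals_insert ⟨Wb, WForm_mem_D2 m hWb, hb⟩]

lemma eq_case {u v : Em m ⊕ Bool}
    (h : identifySystem u v (Ubig m (M1 m)) = identifySystem u v (Ubig m (M2 m))) :
    SystemIso (Finset.univ.erase v) (starMinor u v (Ubig m (M1 m)))
      (Finset.univ.erase v) (starMinor u v (Ubig m (M2 m))) := by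
  refine ⟨id, Set.bijOn_id _, ?_⟩
  unfold starMinor
  simp only [Finset.image_id, Finset.image_id']
  rw [h]

end Aux5

section Aux6

set_option linter.unusedSectionVars false

open Finset

variable (m : ℕ) [NeZero m]

lemma bigB_mono {S T : Finset (Em m)} (h : S ⊆ T) : bigB m S ⊆ bigB m T := by
  unfold bigB
  exact Finset.insert_subset_insert _ (Finset.image_subset_image h)

@[simp] lemma mem_bigB {S : Finset (Em m)} {x : Em m ⊕ Bool} :
    x ∈ bigB m S ↔ x = Sum.inr false ∨ ∃ y ∈ S, x = Sum.inl y := by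
  unfold bigB
  simp only [Finset.mem_insert, Finset.mem_image]
  constructor
  · rintro (rfl | ⟨y, hy, rfl⟩)
    · exact Or.inl rfl
    · exact Or.inr ⟨y, hy, rfl⟩
  · rintro (rfl | ⟨y, hy, rfl⟩)
    · exact Or.inl rfl
    · exact Or.inr ⟨y, hy, rfl⟩

lemma identifyBlock_bigB_emem (a b : Em m) (S : Finset (Em m)) :
    identifyBlock (Sum.inl a : Em m ⊕ Bool) (Sum.inl b) (bigB m S)
      = bigB m (identifyBlock a b S) := by
  unfold identifyBlock bigB
  have hmem : (Sum.inl b : Em m ⊕ Bool) ∈ insert (Sum.inr false) (S.image Sum.inl) ↔ b ∈ S := by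
    simp
  by_cases hb : b ∈ S
  · rw [if_pos (hmem.mpr hb), if_pos hb, Finset.image_insert,
      Finset.erase_insert_of_ne (by simp), Finset.image_erase Sum.inl_injective,
      Finset.insert_comm]
  · rw [if_neg (fun h => hb (hmem.mp h)), if_neg hb]

lemma identifyBlock_bigB_vtrue (u : Em m ⊕ Bool) (S : Finset (Em m)) :
    identifyBlock u (Sum.inr true) (bigB m S) = bigB m S := by
  unfold identifyBlock
  rw [if_neg]
  simp

lemma identifyBlock_bigB_vfalse (a : Em m) (S : Finset (Em m)) :
    identifyBlock (Sum.inl a : Em m ⊕ Bool) (Sum.inr false) (bigB m S)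
      = (insert a S).image Sum.inl := by
  unfold identifyBlock bigB
  rw [if_pos (Finset.mem_insert_self _ _), Finset.erase_insert (by simp),
    Finset.image_insert]

lemma identifyBlock_bigB_utrue (b : Em m) (S : Finset (Em m)) (hb : b ∈ S) :
    identifyBlock (Sum.inr true : Em m ⊕ Bool) (Sum.inl b) (bigB m S)
      = insert (Sum.inr true) (bigB m (S.erase b)) := by
  unfold identifyBlock bigB
  rw [if_pos (by simp [hb]), Finset.erase_insert_of_ne (by simp),
    Finset.image_erase Sum.inl_injective]

lemma identifyBlock_bigB_ufalse (b : Em m) (S : Finset (Em m)) :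
    identifyBlock (Sum.inr false : Em m ⊕ Bool) (Sum.inl b) (bigB m S)
      = bigB m (S.erase b) := by
  unfold identifyBlock bigB
  by_cases hb : b ∈ S
  · rw [if_pos (by simp [hb]), Finset.erase_insert_of_ne (by simp),
      Finset.image_erase Sum.inl_injective, Finset.insert_idem]
  · rw [if_neg (by simp [hb]), Finset.erase_eq_of_notMem hb]

lemma identifyBlock_two_vtrue (u : Em m ⊕ Bool) :
    identifyBlock u (Sum.inr true) ({Sum.inr false, Sum.inr true} : Finset (Em m ⊕ Bool))
      = {u, Sum.inr false} := by
  unfold identifyBlock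
  rw [if_pos (by simp)]
  ext x
  simp only [Finset.mem_insert, Finset.mem_erase, Finset.mem_singleton]
  constructor
  · rintro (rfl | ⟨hne, rfl | rfl⟩)
    · exact Or.inl rfl
    · exact Or.inr rfl
    · exact absurd rfl hne
  · rintro (rfl | rfl)
    · exact Or.inl rfl
    · exact Or.inr ⟨by simp, Or.inl rfl⟩

lemma identifyBlock_two_vfalse (u : Em m ⊕ Bool) :
    identifyBlock u (Sum.inr false) ({Sum.inr false, Sum.inr true} : Finset (Em m ⊕ Bool))
      = {u, Sum.inr true} := by
  unfold identifyBlock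
  rw [if_pos (by simp)]
  ext x
  simp only [Finset.mem_insert, Finset.mem_erase, Finset.mem_singleton]
  constructor
  · rintro (rfl | ⟨hne, rfl | rfl⟩)
    · exact Or.inl rfl
    · exact absurd rfl hne
    · exact Or.inr rfl
  · rintro (rfl | rfl)
    · exact Or.inl rfl
    · exact Or.inr ⟨by simp, Or.inr rfl⟩

lemma identifyBlock_two_vem (u : Em m ⊕ Bool) (b : Em m) :
    identifyBlock u (Sum.inl b) ({Sum.inr false, Sum.inr true} : Finset (Em m ⊕ Bool))
      = {Sum.inr false, Sum.inr true} := by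
  unfold identifyBlock
  rw [if_neg (by simp)]

end Aux6

section Aux7

set_option linter.unusedSectionVars false

open Finset

variable (m : ℕ) [NeZero m]

lemma AJ_identify_rl (p : ZMod m) (J : Finset (ZMod m)) :
    identifyBlock (Sum.inr p : Em m) (Sum.inl p) (AJ m J) = AJ m (J.erase p) := by
  by_cases hp : p ∈ J
  · rw [identifyBlock, if_pos (by simpa using hp)]
    ext x
    rcases x with j | j
    · simp only [Finset.mem_insert, Finset.mem_erase, mem_AJ_inl, reduceCtorEq, false_or,
        ne_eq, Sum.inl.injEq]
      all_goals tauto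
    · simp only [Finset.mem_insert, Finset.mem_erase, mem_AJ_inr, Sum.inr.injEq, ne_eq,
        reduceCtorEq, not_false_iff, and_true, not_and]
      by_cases hj : j = p
      · subst hj
        simp [hp]
      · simp [hj]
  · rw [identifyBlock, if_neg (by simpa using hp), Finset.erase_eq_of_notMem hp]

lemma AJ_identify_lr (p : ZMod m) (J : Finset (ZMod m)) :
    identifyBlock (Sum.inl p : Em m) (Sum.inr p) (AJ m J) = AJ m (insert p J) := by
  by_cases hp : p ∈ J
  · rw [identifyBlock, if_neg (by simpa using hp), Finset.insert_eq_self.mpr hp]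
  · rw [identifyBlock, if_pos (by simpa using hp)]
    ext x
    rcases x with j | j
    · simp only [Finset.mem_insert, Finset.mem_erase, mem_AJ_inl, Sum.inl.injEq, ne_eq,
        reduceCtorEq, not_false_iff, and_true]
      all_goals tauto
    · simp only [Finset.mem_insert, Finset.mem_erase, mem_AJ_inr, reduceCtorEq, false_or,
        ne_eq, Sum.inr.injEq, not_and, Finset.mem_insert]
      by_cases hj : j = p
      · subst hj
        simp [hp]
      · simp [hj]

lemma erase_tog (p : ZMod m) (J : Finset (ZMod m)) :
    (tog m p J).erase p = J.erase p := by
  by_cases hp : p ∈ J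
  · rw [tog, if_pos hp, Finset.erase_idem]
  · rw [tog, if_neg hp, Finset.erase_insert hp, Finset.erase_eq_of_notMem hp]

lemma insert_tog (p : ZMod m) (J : Finset (ZMod m)) :
    insert p (tog m p J) = insert p J := by
  by_cases hp : p ∈ J
  · rw [tog, if_pos hp, Finset.insert_erase hp, Finset.insert_eq_self.mpr hp]
  · rw [tog, if_neg hp, Finset.insert_idem]

lemma G_part_eq (p : ZMod m) (u v : Em m ⊕ Bool)
    (e : Finset (ZMod m) → Finset (Em m ⊕ Bool))
    (hpt : ∀ J, identifyBlock u v (bigB m (AJ m J)) = e J)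
    (hte : ∀ J, e (tog m p J) = e J) :
    ((G1 m).image (bigB m)).image (identifyBlock u v)
      = ((G2 m).image (bigB m)).image (identifyBlock u v) := by
  unfold G1 G2
  rw [Finset.image_image, Finset.image_image, Finset.image_image, Finset.image_image]
  have key : ∀ s : Finset (Finset (ZMod m)),
      s.image ((identifyBlock u v ∘ bigB m) ∘ AJ m) = s.image e :=
    fun s => Finset.image_congr fun J _ => hpt J
  rw [key, key, image_parity m p e hte]

lemma idsys_eq (p : ZMod m) (u v : Em m ⊕ Bool)
    (e : Finset (ZMod m) → Finset (Em m ⊕ Bool))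
    (hpt : ∀ J, identifyBlock u v (bigB m (AJ m J)) = e J)
    (hte : ∀ J, e (tog m p J) = e J) :
    identifySystem u v (Ubig m (M1 m)) = identifySystem u v (Ubig m (M2 m)) := by
  have expand : ∀ G : Finset (Finset (Em m)),
      identifySystem u v (Ubig m (G ∪ Fsys m))
        = ((G.image (bigB m)).image (identifyBlock u v))
          ∪ (((Fsys m).image (bigB m)).image (identifyBlock u v))
          ∪ (({({Sum.inr false, Sum.inr true} : Finset (Em m ⊕ Bool))} :
              Finset (Finset (Em m ⊕ Bool))).image (identifyBlock u v)) := by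
    intro G
    show ((G ∪ Fsys m).image (bigB m) ∪ _).image (identifyBlock u v) = _
    rw [Finset.image_union, Finset.image_union, Finset.image_union]
  unfold M1 M2
  rw [expand, expand, G_part_eq m p u v e hpt hte]

lemma eq_case_rl (p : ZMod m) :
    SystemIso (Finset.univ.erase (Sum.inl (Sum.inl p) : Em m ⊕ Bool))
      (starMinor (Sum.inl (Sum.inr p)) (Sum.inl (Sum.inl p)) (Ubig m (M1 m)))
      (Finset.univ.erase (Sum.inl (Sum.inl p)))
      (starMinor (Sum.inl (Sum.inr p)) (Sum.inl (Sum.inl p)) (Ubig m (M2 m))) :=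
  eq_case m (idsys_eq m p _ _ (fun J => bigB m (AJ m (J.erase p)))
    (fun J => by rw [identifyBlock_bigB_emem, AJ_identify_rl])
    (fun J => by
      show bigB m (AJ m ((tog m p J).erase p)) = bigB m (AJ m (J.erase p))
      rw [erase_tog]))

lemma eq_case_lr (p : ZMod m) :
    SystemIso (Finset.univ.erase (Sum.inl (Sum.inr p) : Em m ⊕ Bool))
      (starMinor (Sum.inl (Sum.inl p)) (Sum.inl (Sum.inr p)) (Ubig m (M1 m)))
      (Finset.univ.erase (Sum.inl (Sum.inr p)))
      (starMinor (Sum.inl (Sum.inl p)) (Sum.inl (Sum.inr p)) (Ubig m (M2 m))) :=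
  eq_case m (idsys_eq m p _ _ (fun J => bigB m (AJ m (insert p J)))
    (fun J => by rw [identifyBlock_bigB_emem, AJ_identify_lr])
    (fun J => by
      show bigB m (AJ m (insert p (tog m p J))) = bigB m (AJ m (insert p J))
      rw [insert_tog]))

end Aux7

section Aux8

set_option linter.unusedSectionVars false

open Finset

variable (m : ℕ) [NeZero m]

lemma identifyBlock_bigB_vz (u : Em m ⊕ Bool) (S : Finset (Em m)) :
    identifyBlock u (Sum.inr false) (bigB m S) = insert u (S.image Sum.inl) := by
  unfold identifyBlock bigB
  rw [if_pos (Finset.mem_insert_self _ _), Finset.erase_insert (by simp)]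

lemma zadd_ne {a : ZMod m} (q : ZMod m) (h : a ≠ 0) : q + a ≠ q :=
  fun hh => h (add_eq_left.mp hh)

lemma sub_emem (a b : Em m) {S T : Finset (Em m)}
    (h : identifyBlock a b S ⊆ identifyBlock a b T) :
    identifyBlock (Sum.inl a : Em m ⊕ Bool) (Sum.inl b) (bigB m S)
      ⊆ identifyBlock (Sum.inl a) (Sum.inl b) (bigB m T) := by
  rw [identifyBlock_bigB_emem, identifyBlock_bigB_emem]
  exact bigB_mono m h

lemma sub_vtrue (u : Em m ⊕ Bool) {S T : Finset (Em m)} (h : S ⊆ T) :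
    identifyBlock u (Sum.inr true) (bigB m S) ⊆ identifyBlock u (Sum.inr true) (bigB m T) := by
  rw [identifyBlock_bigB_vtrue, identifyBlock_bigB_vtrue]
  exact bigB_mono m h

lemma sub_two_vtrue (u : Em m ⊕ Bool) {T : Finset (Em m)} (h : u ∈ bigB m T) :
    identifyBlock u (Sum.inr true) ({Sum.inr false, Sum.inr true} : Finset (Em m ⊕ Bool))
      ⊆ identifyBlock u (Sum.inr true) (bigB m T) := by
  rw [identifyBlock_two_vtrue, identifyBlock_bigB_vtrue]
  rw [Finset.insert_subset_iff, Finset.singleton_subset_iff]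
  exact ⟨h, Finset.mem_insert_self _ _⟩

lemma sub_vz (u : Em m ⊕ Bool) {S T : Finset (Em m)}
    (h : ∀ y ∈ S, Sum.inl y = u ∨ y ∈ T) :
    identifyBlock u (Sum.inr false) (bigB m S) ⊆ identifyBlock u (Sum.inr false) (bigB m T) := by
  rw [identifyBlock_bigB_vz, identifyBlock_bigB_vz]
  intro x hx
  rcases Finset.mem_insert.mp hx with rfl | hx
  · exact Finset.mem_insert_self _ _
  · obtain ⟨y, hy, rfl⟩ := Finset.mem_image.mp hx
    rcases h y hy with he | hT
    · rw [he]
      exact Finset.mem_insert_self _ _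
    · exact Finset.mem_insert_of_mem (Finset.mem_image_of_mem _ hT)

lemma sub_two_utrue (b : Em m) {T : Finset (Em m)} (hb : b ∈ T) :
    identifyBlock (Sum.inr true : Em m ⊕ Bool) (Sum.inl b)
        ({Sum.inr false, Sum.inr true} : Finset (Em m ⊕ Bool))
      ⊆ identifyBlock (Sum.inr true) (Sum.inl b) (bigB m T) := by
  rw [identifyBlock_two_vem, identifyBlock_bigB_utrue m b T hb]
  intro x hx
  rcases Finset.mem_insert.mp hx with rfl | hx
  · exact Finset.mem_insert_of_mem (Finset.mem_insert_self _ _)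
  · rw [Finset.mem_singleton] at hx
    subst hx
    exact Finset.mem_insert_self _ _

lemma sub_ufalse (b : Em m) {S T : Finset (Em m)} (h : S.erase b ⊆ T.erase b) :
    identifyBlock (Sum.inr false : Em m ⊕ Bool) (Sum.inl b) (bigB m S)
      ⊆ identifyBlock (Sum.inr false) (Sum.inl b) (bigB m T) := by
  rw [identifyBlock_bigB_ufalse, identifyBlock_bigB_ufalse]
  exact bigB_mono m h

lemma even_pair {a b : ZMod m} (h : a ≠ b) : Even (({a, b} : Finset (ZMod m)).card) := by
  rw [Finset.card_insert_of_notMem (by simpa using h), Finset.card_singleton]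
  exact ⟨1, rfl⟩

lemma even_empty_card : Even ((∅ : Finset (ZMod m)).card) := by simp

end Aux8

section Aux9

set_option linter.unusedSectionVars false

open Finset

variable (m : ℕ) [NeZero m]

lemma identify_subset_of (a b : Em m) {S T : Finset (Em m)}
    (hA : (a ∈ T ∧ a ≠ b) ∨ b ∈ T)
    (hS : ∀ x ∈ S, x ≠ b → x = a ∨ (x ∈ T ∧ x ≠ b)) :
    identifyBlock a b S ⊆ identifyBlock a b T := by
  intro x hx
  rw [mem_identifyBlock] at hx ⊢
  have hAx : (x = a) → ((x = a ∧ b ∈ T) ∨ (x ∈ T ∧ x ≠ b)) := by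
    rintro rfl
    rcases hA with ⟨haT, hab⟩ | hbT
    · exact Or.inr ⟨haT, hab⟩
    · exact Or.inl ⟨rfl, hbT⟩
  rcases hx with ⟨rfl, _⟩ | ⟨hxS, hxb⟩
  · exact hAx rfl
  · rcases hS x hxS hxb with rfl | ⟨hxT, _⟩
    · exact hAx rfl
    · exact Or.inr ⟨hxT, hxb⟩

lemma sigk_fix_ll {k p : ZMod m} (h : p ≠ k) :
    sigk m k (Sum.inl (Sum.inl p)) = Sum.inl (Sum.inl p) := by
  rw [sigk_inl, tauk_inl m h]

lemma sigk_fix_rr {k p : ZMod m} (h : p ≠ k) :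
    sigk m k (Sum.inl (Sum.inr p)) = Sum.inl (Sum.inr p) := by
  rw [sigk_inl, tauk_inr m h]

/-- membership helper: decompose an element of `AJ m {c₁, c₂}`. -/
lemma mem_AJ_pair {c₁ c₂ : ZMod m} {x : Em m} (hx : x ∈ AJ m {c₁, c₂}) :
    x = Sum.inl c₁ ∨ x = Sum.inl c₂ ∨ ∃ j, x = Sum.inr j ∧ j ≠ c₁ ∧ j ≠ c₂ := by
  rcases x with j | j
  · rw [mem_AJ_inl, Finset.mem_insert, Finset.mem_singleton] at hx
    rcases hx with rfl | rfl
    · exact Or.inl rfl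
    · exact Or.inr (Or.inl rfl)
  · rw [mem_AJ_inr, Finset.mem_insert, Finset.mem_singleton] at hx
    push_neg at hx
    exact Or.inr (Or.inr ⟨j, rfl, hx.1, hx.2⟩)

lemma mem_AJ_empty {x : Em m} (hx : x ∈ AJ m (∅ : Finset (ZMod m))) :
    ∃ j, x = Sum.inr j := by
  rcases x with j | j
  · rw [mem_AJ_inl] at hx
    exact absurd hx (Finset.notMem_empty j)
  · exact ⟨j, rfl⟩

end Aux9

section Aux10

set_option linter.unusedSectionVars false

open Finset

variable (m : ℕ) [NeZero m]

lemma caseB1a (hm : 3 ≤ m) {p q : ZMod m} (hpq : p ≠ q) (_hp1 : p ≠ q + 1) :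
    identifyBlock (Sum.inl p : Em m) (Sum.inl q) (AJ m {q, q + 1})
      ⊆ identifyBlock (Sum.inl p) (Sum.inl q) (Fblock m q) := by
  have h1 : (1 : ZMod m) ≠ 0 := zmod_one_ne m hm
  have e1 : q + 1 ≠ q := zadd_ne m q h1
  apply identify_subset_of
  · exact Or.inl ⟨by rw [mem_Fblock]; exact ⟨by simp [hpq], by simp, by simp⟩, by simp [hpq]⟩
  · intro x hx hne
    rcases mem_AJ_pair m hx with rfl | rfl | ⟨j, rfl, hj1, hj2⟩
    · exact absurd rfl hne
    · exact Or.inr ⟨by rw [mem_Fblock]; exact ⟨by simp [e1], by simp, by simp⟩, hne⟩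
    · exact Or.inr ⟨by rw [mem_Fblock]; exact ⟨by simp, by simp [hj1], by simp [hj2, show (q + 1 + 1 : ZMod m) = q + 2 from by ring]⟩, hne⟩

lemma caseB1b (hm : 3 ≤ m) {p q : ZMod m} (hpq : p ≠ q) (hp1 : p ≠ q + 1) :
    identifyBlock (Sum.inl p : Em m) (Sum.inl q) (AJ m {q, q + 2})
      ⊆ identifyBlock (Sum.inl p) (Sum.inl q) (Hset m (q + 1)) := by
  have h1 : (1 : ZMod m) ≠ 0 := zmod_one_ne m hm
  have h2 : (2 : ZMod m) ≠ 0 := zmod_two_ne m hm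
  have e2 : q + 2 ≠ q := zadd_ne m q h2
  have e21 : q + 2 ≠ q + 1 := by
    rw [show (q + 2 : ZMod m) = (q + 1) + 1 by ring]
    exact zadd_ne m (q + 1) h1
  have hq : (q + 1 - 1 : ZMod m) = q := by ring
  apply identify_subset_of
  · exact Or.inl ⟨by rw [mem_Hset, hq]; exact ⟨by simp [hpq], by simp, by simp [hp1]⟩,
      by simp [hpq]⟩
  · intro x hx hne
    rcases mem_AJ_pair m hx with rfl | rfl | ⟨j, rfl, hj1, hj2⟩
    · exact absurd rfl hne
    · exact Or.inr ⟨by rw [mem_Hset, hq]; exact ⟨by simp [e2], by simp, by simp [e21]⟩, hne⟩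
    · exact Or.inr ⟨by rw [mem_Hset, hq]; exact ⟨by simp, by simp [hj1], by simp⟩, hne⟩

lemma caseB2a (hm : 3 ≤ m) (q : ZMod m) :
    identifyBlock (Sum.inl (q + 1) : Em m) (Sum.inl q) (AJ m {q + 1, q + 2})
      ⊆ identifyBlock (Sum.inl (q + 1)) (Sum.inl q) (Fblock m (q + 1)) := by
  have h1 : (1 : ZMod m) ≠ 0 := zmod_one_ne m hm
  have e1 : q + 1 ≠ q := zadd_ne m q h1
  have e1' : q ≠ q + 1 := Ne.symm e1
  have e21 : q + 2 ≠ q + 1 := by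
    rw [show (q + 2 : ZMod m) = (q + 1) + 1 by ring]
    exact zadd_ne m (q + 1) h1
  apply identify_subset_of
  · exact Or.inr (by rw [mem_Fblock]; exact ⟨by simp [e1'], by simp, by simp⟩)
  · intro x hx hne
    rcases mem_AJ_pair m hx with rfl | rfl | ⟨j, rfl, hj1, hj2⟩
    · exact Or.inl rfl
    · exact Or.inr ⟨by rw [mem_Fblock]; exact ⟨by simp [e21], by simp, by simp⟩, hne⟩
    · exact Or.inr ⟨by rw [mem_Fblock]; exact ⟨by simp, by simp [hj1], by simp [hj2, show (q + 1 + 1 : ZMod m) = q + 2 from by ring]⟩, hne⟩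

lemma caseB2b (hm : 3 ≤ m) (q : ZMod m) :
    identifyBlock (Sum.inl (q + 1) : Em m) (Sum.inl q) (AJ m {q, q + 1})
      ⊆ identifyBlock (Sum.inl (q + 1)) (Sum.inl q) (Hset m (q + 2)) := by
  have h1 : (1 : ZMod m) ≠ 0 := zmod_one_ne m hm
  have h2 : (2 : ZMod m) ≠ 0 := zmod_two_ne m hm
  have e1' : q ≠ q + 1 := Ne.symm (zadd_ne m q h1)
  have e2' : q ≠ q + 2 := Ne.symm (zadd_ne m q h2)
  have hq : (q + 2 - 1 : ZMod m) = q + 1 := by ring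
  apply identify_subset_of
  · exact Or.inr (by rw [mem_Hset, hq]; exact ⟨by simp [e1'], by simp, by simp [e2', show (q + 1 + 1 : ZMod m) = q + 2 from by ring]⟩)
  · intro x hx hne
    rcases mem_AJ_pair m hx with rfl | rfl | ⟨j, rfl, hj1, hj2⟩
    · exact absurd rfl hne
    · exact Or.inl rfl
    · exact Or.inr ⟨by rw [mem_Hset, hq]; exact ⟨by simp, by simp [hj2, show (q + 1 + 1 : ZMod m) = q + 2 from by ring], by simp⟩, hne⟩

lemma caseB3a (hm : 3 ≤ m) {p q : ZMod m} (hpq : p ≠ q) (hp1 : p ≠ q + 1) :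
    identifyBlock (Sum.inr p : Em m) (Sum.inr q) (AJ m {q + 1, q + 2})
      ⊆ identifyBlock (Sum.inr p) (Sum.inr q) (Fblock m q) := by
  have h1 : (1 : ZMod m) ≠ 0 := zmod_one_ne m hm
  have h2 : (2 : ZMod m) ≠ 0 := zmod_two_ne m hm
  have e1 : q + 1 ≠ q := zadd_ne m q h1
  have e2 : q + 2 ≠ q := zadd_ne m q h2
  apply identify_subset_of
  · exact Or.inl ⟨by rw [mem_Fblock]; exact ⟨by simp, by simp [hpq], by simp [hp1]⟩,
      by simp [hpq]⟩
  · intro x hx hne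
    rcases mem_AJ_pair m hx with rfl | rfl | ⟨j, rfl, hj1, hj2⟩
    · exact Or.inr ⟨by rw [mem_Fblock]; exact ⟨by simp [e1], by simp, by simp⟩, hne⟩
    · exact Or.inr ⟨by rw [mem_Fblock]; exact ⟨by simp [e2], by simp, by simp⟩, hne⟩
    · exact Or.inr ⟨by rw [mem_Fblock]; exact ⟨by simp, hne, by simp [hj1]⟩, hne⟩

lemma caseB3b (hm : 3 ≤ m) {p q : ZMod m} (hpq : p ≠ q) (_hp1 : p ≠ q + 1) :
    identifyBlock (Sum.inr p : Em m) (Sum.inr q) (AJ m (∅ : Finset (ZMod m)))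
      ⊆ identifyBlock (Sum.inr p) (Sum.inr q) (Hset m (q + 1)) := by
  have hq : (q + 1 - 1 : ZMod m) = q := by ring
  apply identify_subset_of
  · exact Or.inl ⟨by rw [mem_Hset, hq]; exact ⟨by simp, by simp [hpq], by simp⟩,
      by simp [hpq]⟩
  · intro x hx hne
    obtain ⟨j, rfl⟩ := mem_AJ_empty m hx
    exact Or.inr ⟨by rw [mem_Hset, hq]; exact ⟨by simp, hne, by simp⟩, hne⟩

lemma caseB4a (hm : 3 ≤ m) (q : ZMod m) :
    identifyBlock (Sum.inr (q + 1) : Em m) (Sum.inr q) (AJ m {q, q + 2})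
      ⊆ identifyBlock (Sum.inr (q + 1)) (Sum.inr q) (Fblock m (q + 1)) := by
  have h1 : (1 : ZMod m) ≠ 0 := zmod_one_ne m hm
  have h2 : (2 : ZMod m) ≠ 0 := zmod_two_ne m hm
  have e1' : q ≠ q + 1 := Ne.symm (zadd_ne m q h1)
  have e2' : q ≠ q + 2 := Ne.symm (zadd_ne m q h2)
  have e21 : q + 2 ≠ q + 1 := by
    rw [show (q + 2 : ZMod m) = (q + 1) + 1 by ring]
    exact zadd_ne m (q + 1) h1
  apply identify_subset_of
  · exact Or.inr (by rw [mem_Fblock]; exact ⟨by simp, by simp [e1'], by simp [e2', show (q + 1 + 1 : ZMod m) = q + 2 from by ring]⟩)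
  · intro x hx hne
    rcases mem_AJ_pair m hx with rfl | rfl | ⟨j, rfl, hj1, hj2⟩
    · exact Or.inr ⟨by rw [mem_Fblock]; exact ⟨by simp [e1'], by simp, by simp⟩, hne⟩
    · exact Or.inr ⟨by rw [mem_Fblock]; exact ⟨by simp [e21], by simp, by simp⟩, hne⟩
    · by_cases hj : j = q + 1
      · subst hj
        exact Or.inl rfl
      · exact Or.inr ⟨by rw [mem_Fblock]; exact ⟨by simp, by simp [hj], by simp [hj2, show (q + 1 + 1 : ZMod m) = q + 2 from by ring]⟩, hne⟩

lemma caseB4b (hm : 3 ≤ m) (q : ZMod m) :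
    identifyBlock (Sum.inr (q + 1) : Em m) (Sum.inr q) (AJ m (∅ : Finset (ZMod m)))
      ⊆ identifyBlock (Sum.inr (q + 1)) (Sum.inr q) (Hset m (q + 2)) := by
  have h1 : (1 : ZMod m) ≠ 0 := zmod_one_ne m hm
  have e1' : q ≠ q + 1 := Ne.symm (zadd_ne m q h1)
  have hq : (q + 2 - 1 : ZMod m) = q + 1 := by ring
  apply identify_subset_of
  · exact Or.inr (by rw [mem_Hset, hq]; exact ⟨by simp, by simp [e1'], by simp⟩)
  · intro x hx hne
    obtain ⟨j, rfl⟩ := mem_AJ_empty m hx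
    by_cases hj : j = q + 1
    · subst hj
      exact Or.inl rfl
    · exact Or.inr ⟨by rw [mem_Hset, hq]; exact ⟨by simp, by simp [hj], by simp⟩, hne⟩

lemma caseB5a (hm : 3 ≤ m) {p q : ZMod m} (hpq : p ≠ q) (_hp1 : p ≠ q + 1) :
    identifyBlock (Sum.inl p : Em m) (Sum.inr q) (AJ m {q + 1, q + 2})
      ⊆ identifyBlock (Sum.inl p) (Sum.inr q) (Fblock m q) := by
  have h1 : (1 : ZMod m) ≠ 0 := zmod_one_ne m hm
  have h2 : (2 : ZMod m) ≠ 0 := zmod_two_ne m hm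
  have e1 : q + 1 ≠ q := zadd_ne m q h1
  have e2 : q + 2 ≠ q := zadd_ne m q h2
  apply identify_subset_of
  · exact Or.inl ⟨by rw [mem_Fblock]; exact ⟨by simp [hpq], by simp, by simp⟩, by simp⟩
  · intro x hx hne
    rcases mem_AJ_pair m hx with rfl | rfl | ⟨j, rfl, hj1, hj2⟩
    · exact Or.inr ⟨by rw [mem_Fblock]; exact ⟨by simp [e1], by simp, by simp⟩, hne⟩
    · exact Or.inr ⟨by rw [mem_Fblock]; exact ⟨by simp [e2], by simp, by simp⟩, hne⟩
    · exact Or.inr ⟨by rw [mem_Fblock]; exact ⟨by simp, hne, by simp [hj1]⟩, hne⟩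

lemma caseB5b (hm : 3 ≤ m) {p q : ZMod m} (hpq : p ≠ q) (hp1 : p ≠ q + 1) :
    identifyBlock (Sum.inl p : Em m) (Sum.inr q) (AJ m (∅ : Finset (ZMod m)))
      ⊆ identifyBlock (Sum.inl p) (Sum.inr q) (Hset m (q + 1)) := by
  have hq : (q + 1 - 1 : ZMod m) = q := by ring
  apply identify_subset_of
  · exact Or.inl ⟨by rw [mem_Hset, hq]; exact ⟨by simp [hpq], by simp, by simp [hp1]⟩, by simp⟩
  · intro x hx hne
    obtain ⟨j, rfl⟩ := mem_AJ_empty m hx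
    exact Or.inr ⟨by rw [mem_Hset, hq]; exact ⟨by simp, hne, by simp⟩, hne⟩

lemma caseB6a (hm : 3 ≤ m) (q : ZMod m) :
    identifyBlock (Sum.inl (q + 1) : Em m) (Sum.inr q) (AJ m {q + 1, q + 2})
      ⊆ identifyBlock (Sum.inl (q + 1)) (Sum.inr q) (Fblock m (q + 1)) := by
  have h1 : (1 : ZMod m) ≠ 0 := zmod_one_ne m hm
  have h2 : (2 : ZMod m) ≠ 0 := zmod_two_ne m hm
  have e1' : q ≠ q + 1 := Ne.symm (zadd_ne m q h1)
  have e2' : q ≠ q + 2 := Ne.symm (zadd_ne m q h2)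
  have e21 : q + 2 ≠ q + 1 := by
    rw [show (q + 2 : ZMod m) = (q + 1) + 1 by ring]
    exact zadd_ne m (q + 1) h1
  apply identify_subset_of
  · exact Or.inr (by rw [mem_Fblock]; exact ⟨by simp, by simp [e1'], by simp [e2', show (q + 1 + 1 : ZMod m) = q + 2 from by ring]⟩)
  · intro x hx hne
    rcases mem_AJ_pair m hx with rfl | rfl | ⟨j, rfl, hj1, hj2⟩
    · exact Or.inl rfl
    · exact Or.inr ⟨by rw [mem_Fblock]; exact ⟨by simp [e21], by simp, by simp⟩, hne⟩
    · exact Or.inr ⟨by rw [mem_Fblock]; exact ⟨by simp, by simp [hj1], by simp [hj2, show (q + 1 + 1 : ZMod m) = q + 2 from by ring]⟩, hne⟩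

lemma caseB6b (hm : 3 ≤ m) (q : ZMod m) :
    identifyBlock (Sum.inl (q + 1) : Em m) (Sum.inr q) (AJ m {q, q + 1})
      ⊆ identifyBlock (Sum.inl (q + 1)) (Sum.inr q) (Hset m (q + 2)) := by
  have h1 : (1 : ZMod m) ≠ 0 := zmod_one_ne m hm
  have h2 : (2 : ZMod m) ≠ 0 := zmod_two_ne m hm
  have e1' : q ≠ q + 1 := Ne.symm (zadd_ne m q h1)
  have e2' : q ≠ q + 2 := Ne.symm (zadd_ne m q h2)
  have hq : (q + 2 - 1 : ZMod m) = q + 1 := by ring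
  apply identify_subset_of
  · exact Or.inr (by rw [mem_Hset, hq]; exact ⟨by simp, by simp [e1'], by simp⟩)
  · intro x hx hne
    rcases mem_AJ_pair m hx with rfl | rfl | ⟨j, rfl, hj1, hj2⟩
    · exact Or.inr ⟨by rw [mem_Hset, hq]; exact ⟨by simp [e1'], by simp, by simp [e2', show (q + 1 + 1 : ZMod m) = q + 2 from by ring]⟩, hne⟩
    · exact Or.inl rfl
    · exact Or.inr ⟨by rw [mem_Hset, hq]; exact ⟨by simp, by simp [hj2, show (q + 1 + 1 : ZMod m) = q + 2 from by ring], by simp⟩, hne⟩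

lemma caseB7a (hm : 3 ≤ m) {p q : ZMod m} (hpq : p ≠ q) (hp1 : p ≠ q + 1) :
    identifyBlock (Sum.inr p : Em m) (Sum.inl q) (AJ m {q, q + 1})
      ⊆ identifyBlock (Sum.inr p) (Sum.inl q) (Fblock m q) := by
  have h1 : (1 : ZMod m) ≠ 0 := zmod_one_ne m hm
  have e1 : q + 1 ≠ q := zadd_ne m q h1
  apply identify_subset_of
  · exact Or.inl ⟨by rw [mem_Fblock]; exact ⟨by simp, by simp [hpq], by simp [hp1]⟩, by simp⟩
  · intro x hx hne
    rcases mem_AJ_pair m hx with rfl | rfl | ⟨j, rfl, hj1, hj2⟩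
    · exact absurd rfl hne
    · exact Or.inr ⟨by rw [mem_Fblock]; exact ⟨by simp [e1], by simp, by simp⟩, hne⟩
    · exact Or.inr ⟨by rw [mem_Fblock]; exact ⟨by simp, by simp [hj1], by simp [hj2, show (q + 1 + 1 : ZMod m) = q + 2 from by ring]⟩, hne⟩

lemma caseB7b (hm : 3 ≤ m) {p q : ZMod m} (hpq : p ≠ q) (_hp1 : p ≠ q + 1) :
    identifyBlock (Sum.inr p : Em m) (Sum.inl q) (AJ m {q, q + 2})
      ⊆ identifyBlock (Sum.inr p) (Sum.inl q) (Hset m (q + 1)) := by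
  have h1 : (1 : ZMod m) ≠ 0 := zmod_one_ne m hm
  have h2 : (2 : ZMod m) ≠ 0 := zmod_two_ne m hm
  have e2 : q + 2 ≠ q := zadd_ne m q h2
  have e21 : q + 2 ≠ q + 1 := by
    rw [show (q + 2 : ZMod m) = (q + 1) + 1 by ring]
    exact zadd_ne m (q + 1) h1
  have hq : (q + 1 - 1 : ZMod m) = q := by ring
  apply identify_subset_of
  · exact Or.inl ⟨by rw [mem_Hset, hq]; exact ⟨by simp, by simp [hpq], by simp⟩, by simp⟩
  · intro x hx hne
    rcases mem_AJ_pair m hx with rfl | rfl | ⟨j, rfl, hj1, hj2⟩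
    · exact absurd rfl hne
    · exact Or.inr ⟨by rw [mem_Hset, hq]; exact ⟨by simp [e2], by simp, by simp [e21]⟩, hne⟩
    · exact Or.inr ⟨by rw [mem_Hset, hq]; exact ⟨by simp, by simp [hj1], by simp⟩, hne⟩

lemma caseB8a (hm : 3 ≤ m) (q : ZMod m) :
    identifyBlock (Sum.inr (q + 1) : Em m) (Sum.inl q) (AJ m {q, q + 2})
      ⊆ identifyBlock (Sum.inr (q + 1)) (Sum.inl q) (Fblock m (q + 1)) := by
  have h1 : (1 : ZMod m) ≠ 0 := zmod_one_ne m hm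
  have h2 : (2 : ZMod m) ≠ 0 := zmod_two_ne m hm
  have e1' : q ≠ q + 1 := Ne.symm (zadd_ne m q h1)
  have e21 : q + 2 ≠ q + 1 := by
    rw [show (q + 2 : ZMod m) = (q + 1) + 1 by ring]
    exact zadd_ne m (q + 1) h1
  apply identify_subset_of
  · exact Or.inr (by rw [mem_Fblock]; exact ⟨by simp [e1'], by simp, by simp⟩)
  · intro x hx hne
    rcases mem_AJ_pair m hx with rfl | rfl | ⟨j, rfl, hj1, hj2⟩
    · exact absurd rfl hne
    · exact Or.inr ⟨by rw [mem_Fblock]; exact ⟨by simp [e21], by simp, by simp⟩, hne⟩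
    · by_cases hj : j = q + 1
      · subst hj
        exact Or.inl rfl
      · exact Or.inr ⟨by rw [mem_Fblock]; exact ⟨by simp, by simp [hj], by simp [hj2, show (q + 1 + 1 : ZMod m) = q + 2 from by ring]⟩, hne⟩

lemma caseB8b (hm : 3 ≤ m) (q : ZMod m) :
    identifyBlock (Sum.inr (q + 1) : Em m) (Sum.inl q) (AJ m (∅ : Finset (ZMod m)))
      ⊆ identifyBlock (Sum.inr (q + 1)) (Sum.inl q) (Hset m (q + 2)) := by
  have h1 : (1 : ZMod m) ≠ 0 := zmod_one_ne m hm
  have h2 : (2 : ZMod m) ≠ 0 := zmod_two_ne m hm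
  have e1' : q ≠ q + 1 := Ne.symm (zadd_ne m q h1)
  have e2' : q ≠ q + 2 := Ne.symm (zadd_ne m q h2)
  have hq : (q + 2 - 1 : ZMod m) = q + 1 := by ring
  apply identify_subset_of
  · exact Or.inr (by rw [mem_Hset, hq]; exact ⟨by simp [e1'], by simp, by simp [e2', show (q + 1 + 1 : ZMod m) = q + 2 from by ring]⟩)
  · intro x hx hne
    obtain ⟨j, rfl⟩ := mem_AJ_empty m hx
    by_cases hj : j = q + 1
    · subst hj
      exact Or.inl rfl
    · exact Or.inr ⟨by rw [mem_Hset, hq]; exact ⟨by simp, by simp [hj], by simp⟩, hne⟩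

end Aux10

section Aux11

set_option linter.unusedSectionVars false

open Finset

variable (m : ℕ) [NeZero m]

lemma caseC5a (hm : 3 ≤ m) (q : ZMod m) :
    ∀ y ∈ AJ m {q, q + 1}, (Sum.inl y : Em m ⊕ Bool) = Sum.inl (Sum.inl q)
      ∨ y ∈ Fblock m q := by
  have h1 : (1 : ZMod m) ≠ 0 := zmod_one_ne m hm
  have e1 : q + 1 ≠ q := zadd_ne m q h1
  intro y hy
  rcases mem_AJ_pair m hy with rfl | rfl | ⟨j, rfl, hj1, hj2⟩
  · exact Or.inl rfl
  · exact Or.inr (by rw [mem_Fblock]; exact ⟨by simp [e1], by simp, by simp⟩)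
  · exact Or.inr (by rw [mem_Fblock]; exact ⟨by simp, by simp [hj1], by simp [hj2]⟩)

lemma caseC5b (hm : 3 ≤ m) (q : ZMod m) :
    ∀ y ∈ AJ m {q, q + 2}, (Sum.inl y : Em m ⊕ Bool) = Sum.inl (Sum.inl q)
      ∨ y ∈ Hset m (q + 1) := by
  have h1 : (1 : ZMod m) ≠ 0 := zmod_one_ne m hm
  have h2 : (2 : ZMod m) ≠ 0 := zmod_two_ne m hm
  have e2 : q + 2 ≠ q := zadd_ne m q h2
  have e21 : q + 2 ≠ q + 1 := by
    rw [show (q + 2 : ZMod m) = (q + 1) + 1 by ring]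
    exact zadd_ne m (q + 1) h1
  have hq : (q + 1 - 1 : ZMod m) = q := by ring
  intro y hy
  rcases mem_AJ_pair m hy with rfl | rfl | ⟨j, rfl, hj1, hj2⟩
  · exact Or.inl rfl
  · exact Or.inr (by rw [mem_Hset, hq]; exact ⟨by simp [e2], by simp, by simp [e21]⟩)
  · exact Or.inr (by rw [mem_Hset, hq]; exact ⟨by simp, by simp [hj1], by simp⟩)

lemma caseC6a (hm : 3 ≤ m) (q : ZMod m) :
    ∀ y ∈ AJ m {q + 1, q + 2}, (Sum.inl y : Em m ⊕ Bool) = Sum.inl (Sum.inr q)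
      ∨ y ∈ Fblock m q := by
  have h1 : (1 : ZMod m) ≠ 0 := zmod_one_ne m hm
  have h2 : (2 : ZMod m) ≠ 0 := zmod_two_ne m hm
  have e1 : q + 1 ≠ q := zadd_ne m q h1
  have e2 : q + 2 ≠ q := zadd_ne m q h2
  intro y hy
  rcases mem_AJ_pair m hy with rfl | rfl | ⟨j, rfl, hj1, hj2⟩
  · exact Or.inr (by rw [mem_Fblock]; exact ⟨by simp [e1], by simp, by simp⟩)
  · exact Or.inr (by rw [mem_Fblock]; exact ⟨by simp [e2], by simp, by simp⟩)
  · by_cases hj : j = q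
    · subst hj
      exact Or.inl rfl
    · exact Or.inr (by rw [mem_Fblock]; exact ⟨by simp, by simp [hj], by simp [hj1]⟩)

lemma caseC6b (hm : 3 ≤ m) (q : ZMod m) :
    ∀ y ∈ AJ m (∅ : Finset (ZMod m)), (Sum.inl y : Em m ⊕ Bool) = Sum.inl (Sum.inr q)
      ∨ y ∈ Hset m (q + 1) := by
  have hq : (q + 1 - 1 : ZMod m) = q := by ring
  intro y hy
  obtain ⟨j, rfl⟩ := mem_AJ_empty m hy
  by_cases hj : j = q
  · subst hj
    exact Or.inl rfl
  · exact Or.inr (by rw [mem_Hset, hq]; exact ⟨by simp, by simp [hj], by simp⟩)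

lemma caseC7a (hm : 3 ≤ m) (q : ZMod m) :
    (AJ m {q, q + 1}).erase (Sum.inl q) ⊆ (Fblock m q).erase (Sum.inl q) := by
  have h1 : (1 : ZMod m) ≠ 0 := zmod_one_ne m hm
  have e1 : q + 1 ≠ q := zadd_ne m q h1
  intro x hx
  rw [Finset.mem_erase] at hx ⊢
  obtain ⟨hne, hx⟩ := hx
  refine ⟨hne, ?_⟩
  rcases mem_AJ_pair m hx with rfl | rfl | ⟨j, rfl, hj1, hj2⟩
  · exact absurd rfl hne
  · rw [mem_Fblock]
    exact ⟨by simp [e1], by simp, by simp⟩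
  · rw [mem_Fblock]
    exact ⟨by simp, by simp [hj1], by simp [hj2]⟩

lemma caseC7b (hm : 3 ≤ m) (q : ZMod m) :
    (AJ m {q, q + 2}).erase (Sum.inl q) ⊆ (Hset m (q + 1)).erase (Sum.inl q) := by
  have h1 : (1 : ZMod m) ≠ 0 := zmod_one_ne m hm
  have h2 : (2 : ZMod m) ≠ 0 := zmod_two_ne m hm
  have e2 : q + 2 ≠ q := zadd_ne m q h2
  have e21 : q + 2 ≠ q + 1 := by
    rw [show (q + 2 : ZMod m) = (q + 1) + 1 by ring]
    exact zadd_ne m (q + 1) h1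
  have hq : (q + 1 - 1 : ZMod m) = q := by ring
  intro x hx
  rw [Finset.mem_erase] at hx ⊢
  obtain ⟨hne, hx⟩ := hx
  refine ⟨hne, ?_⟩
  rcases mem_AJ_pair m hx with rfl | rfl | ⟨j, rfl, hj1, hj2⟩
  · exact absurd rfl hne
  · rw [mem_Hset, hq]
    exact ⟨by simp [e2], by simp, by simp [e21]⟩
  · rw [mem_Hset, hq]
    exact ⟨by simp, by simp [hj1], by simp⟩

lemma caseC8a (hm : 3 ≤ m) (q : ZMod m) :
    (AJ m {q + 1, q + 2}).erase (Sum.inr q) ⊆ (Fblock m q).erase (Sum.inr q) := by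
  have h1 : (1 : ZMod m) ≠ 0 := zmod_one_ne m hm
  have h2 : (2 : ZMod m) ≠ 0 := zmod_two_ne m hm
  have e1 : q + 1 ≠ q := zadd_ne m q h1
  have e2 : q + 2 ≠ q := zadd_ne m q h2
  intro x hx
  rw [Finset.mem_erase] at hx ⊢
  obtain ⟨hne, hx⟩ := hx
  refine ⟨hne, ?_⟩
  rcases mem_AJ_pair m hx with rfl | rfl | ⟨j, rfl, hj1, hj2⟩
  · rw [mem_Fblock]
    exact ⟨by simp [e1], by simp, by simp⟩
  · rw [mem_Fblock]
    exact ⟨by simp [e2], by simp, by simp⟩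
  · rw [mem_Fblock]
    exact ⟨by simp, hne, by simp [hj1]⟩

lemma caseC8b (hm : 3 ≤ m) (q : ZMod m) :
    (AJ m (∅ : Finset (ZMod m))).erase (Sum.inr q) ⊆ (Hset m (q + 1)).erase (Sum.inr q) := by
  have hq : (q + 1 - 1 : ZMod m) = q := by ring
  intro x hx
  rw [Finset.mem_erase] at hx ⊢
  obtain ⟨hne, hx⟩ := hx
  refine ⟨hne, ?_⟩
  obtain ⟨j, rfl⟩ := mem_AJ_empty m hx
  rw [mem_Hset, hq]
  exact ⟨by simp, hne, by simp⟩

end Aux11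

section Aux12

set_option linter.unusedSectionVars false

open Finset

variable (m : ℕ) [NeZero m]

lemma inl_mem_bigB {S : Finset (Em m)} {y : Em m} (h : y ∈ S) :
    (Sum.inl y : Em m ⊕ Bool) ∈ bigB m S :=
  Finset.mem_insert_of_mem (Finset.mem_image_of_mem _ h)

end Aux12

/-- For every integer `m ≥ 3`, the Sperner systems `U^{2m+2}_1` and `U^{2m+2}_2` over
`E_m ∪ {0, 0'}` are strongly hypomorphic: for every two-element subset `I` of
`E_m ∪ {0, 0'}`, the Sperner systems `(U^{2m+2}_1)*_I` and `(U^{2m+2}_2)*_I` are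
isomorphic. -/
theorem statement5 (m : ℕ) (hm : 3 ≤ m) :
    letI : NeZero m := ⟨by omega⟩
    StronglyHypomorphic (Finset.univ : Finset (Em m ⊕ Bool))
      (Ubig m (M1 m)) (Ubig m (M2 m)) := by
  haveI : NeZero m := ⟨by omega⟩
  show StronglyHypomorphic (Finset.univ : Finset (Em m ⊕ Bool)) (Ubig m (M1 m)) (Ubig m (M2 m))
  intro u _ v _ huv
  have h1 : (1 : ZMod m) ≠ 0 := zmod_one_ne m hm
  have h2 : (2 : ZMod m) ≠ 0 := zmod_two_ne m hm
  rcases u with (p | p) | bu <;> rcases v with (q | q) | bv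
  · -- u = inl inl p, v = inl inl q
    have hpq : p ≠ q := by simpa using huv
    have e1 : q + 1 ≠ q := zadd_ne m q h1
    have e2 : q + 2 ≠ q := zadd_ne m q h2
    have e21 : q + 2 ≠ q + 1 := by
      rw [show (q + 2 : ZMod m) = (q + 1) + 1 by ring]
      exact zadd_ne m (q + 1) h1
    by_cases hp1 : p = q + 1
    · subst hp1
      refine key m hm _ _ (q + 2) (sigk_fix_ll m (Ne.symm e21)) (sigk_fix_ll m (Ne.symm e2))
        _ _ (Or.inr ⟨{q + 1, q + 2}, even_pair m (fun h => e21 h.symm), rfl⟩)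
        (Or.inr ⟨{q, q + 1}, even_pair m (Ne.symm e1), rfl⟩) ?_ ?_
      · rw [show (q + 2 - 1 : ZMod m) = q + 1 from by ring]
        exact sub_emem m _ _ (caseB2a m hm q)
      · exact sub_emem m _ _ (caseB2b m hm q)
    · refine key m hm _ _ (q + 1) (sigk_fix_ll m hp1) (sigk_fix_ll m (Ne.symm e1))
        _ _ (Or.inr ⟨{q, q + 1}, even_pair m (Ne.symm e1), rfl⟩)
        (Or.inr ⟨{q, q + 2}, even_pair m (Ne.symm e2), rfl⟩) ?_ ?_
      · rw [show (q + 1 - 1 : ZMod m) = q from by ring]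
        exact sub_emem m _ _ (caseB1a m hm hpq hp1)
      · exact sub_emem m _ _ (caseB1b m hm hpq hp1)
  · -- u = inl inl p, v = inl inr q
    have e1 : q + 1 ≠ q := zadd_ne m q h1
    have e2 : q + 2 ≠ q := zadd_ne m q h2
    have e21 : q + 2 ≠ q + 1 := by
      rw [show (q + 2 : ZMod m) = (q + 1) + 1 by ring]
      exact zadd_ne m (q + 1) h1
    by_cases hpq : p = q
    · subst hpq
      exact eq_case_lr m p
    · by_cases hp1 : p = q + 1
      · subst hp1
        refine key m hm _ _ (q + 2) (sigk_fix_ll m (Ne.symm e21)) (sigk_fix_rr m (Ne.symm e2))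
          _ _ (Or.inr ⟨{q + 1, q + 2}, even_pair m (fun h => e21 h.symm), rfl⟩)
          (Or.inr ⟨{q, q + 1}, even_pair m (Ne.symm e1), rfl⟩) ?_ ?_
        · rw [show (q + 2 - 1 : ZMod m) = q + 1 from by ring]
          exact sub_emem m _ _ (caseB6a m hm q)
        · exact sub_emem m _ _ (caseB6b m hm q)
      · refine key m hm _ _ (q + 1) (sigk_fix_ll m hp1) (sigk_fix_rr m (Ne.symm e1))
          _ _ (Or.inr ⟨{q + 1, q + 2}, even_pair m (fun h => e21 h.symm), rfl⟩)
          (Or.inr ⟨∅, even_empty_card m, rfl⟩) ?_ ?_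
        · rw [show (q + 1 - 1 : ZMod m) = q from by ring]
          exact sub_emem m _ _ (caseB5a m hm hpq hp1)
        · exact sub_emem m _ _ (caseB5b m hm hpq hp1)
  · -- u = inl inl p, v = inr bv
    have e1 : p + 1 ≠ p := zadd_ne m p h1
    have e2 : p + 2 ≠ p := zadd_ne m p h2
    have e21 : p + 2 ≠ p + 1 := by
      rw [show (p + 2 : ZMod m) = (p + 1) + 1 by ring]
      exact zadd_ne m (p + 1) h1
    cases bv
    · -- v = 0 : case C5, k = p+1
      refine key m hm _ _ (p + 1) (sigk_fix_ll m (Ne.symm e1)) rfl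
        _ _ (Or.inr ⟨{p, p + 1}, even_pair m (Ne.symm e1), rfl⟩)
        (Or.inr ⟨{p, p + 2}, even_pair m (Ne.symm e2), rfl⟩) ?_ ?_
      · rw [show (p + 1 - 1 : ZMod m) = p from by ring]
        exact sub_vz m _ (caseC5a m hm p)
      · exact sub_vz m _ (caseC5b m hm p)
    · -- v = 0' : case C1, k = p+2
      refine key m hm _ _ (p + 2) (sigk_fix_ll m (Ne.symm e2)) rfl
        _ _ (Or.inl rfl) (Or.inl rfl) ?_ ?_
      · rw [show (p + 2 - 1 : ZMod m) = p + 1 from by ring]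
        refine sub_two_vtrue m _ (inl_mem_bigB m ?_)
        rw [mem_Fblock]
        exact ⟨by simp [Ne.symm e1], by simp, by simp⟩
      · refine sub_two_vtrue m _ (inl_mem_bigB m ?_)
        rw [mem_Hset, show (p + 2 - 1 : ZMod m) = p + 1 from by ring]
        exact ⟨by simp [Ne.symm e1], by simp, by simp [Ne.symm e2]⟩
  · -- u = inl inr p, v = inl inl q
    have e1 : q + 1 ≠ q := zadd_ne m q h1
    have e2 : q + 2 ≠ q := zadd_ne m q h2
    have e21 : q + 2 ≠ q + 1 := by
      rw [show (q + 2 : ZMod m) = (q + 1) + 1 by ring]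
      exact zadd_ne m (q + 1) h1
    by_cases hpq : p = q
    · subst hpq
      exact eq_case_rl m p
    · by_cases hp1 : p = q + 1
      · subst hp1
        refine key m hm _ _ (q + 2) (sigk_fix_rr m (Ne.symm e21)) (sigk_fix_ll m (Ne.symm e2))
          _ _ (Or.inr ⟨{q, q + 2}, even_pair m (Ne.symm e2), rfl⟩)
          (Or.inr ⟨∅, even_empty_card m, rfl⟩) ?_ ?_
        · rw [show (q + 2 - 1 : ZMod m) = q + 1 from by ring]
          exact sub_emem m _ _ (caseB8a m hm q)
        · exact sub_emem m _ _ (caseB8b m hm q)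
      · refine key m hm _ _ (q + 1) (sigk_fix_rr m hp1) (sigk_fix_ll m (Ne.symm e1))
          _ _ (Or.inr ⟨{q, q + 1}, even_pair m (Ne.symm e1), rfl⟩)
          (Or.inr ⟨{q, q + 2}, even_pair m (Ne.symm e2), rfl⟩) ?_ ?_
        · rw [show (q + 1 - 1 : ZMod m) = q from by ring]
          exact sub_emem m _ _ (caseB7a m hm hpq hp1)
        · exact sub_emem m _ _ (caseB7b m hm hpq hp1)
  · -- u = inl inr p, v = inl inr q
    have hpq : p ≠ q := by simpa using huv
    have e1 : q + 1 ≠ q := zadd_ne m q h1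
    have e2 : q + 2 ≠ q := zadd_ne m q h2
    have e21 : q + 2 ≠ q + 1 := by
      rw [show (q + 2 : ZMod m) = (q + 1) + 1 by ring]
      exact zadd_ne m (q + 1) h1
    by_cases hp1 : p = q + 1
    · subst hp1
      refine key m hm _ _ (q + 2) (sigk_fix_rr m (Ne.symm e21)) (sigk_fix_rr m (Ne.symm e2))
        _ _ (Or.inr ⟨{q, q + 2}, even_pair m (Ne.symm e2), rfl⟩)
        (Or.inr ⟨∅, even_empty_card m, rfl⟩) ?_ ?_
      · rw [show (q + 2 - 1 : ZMod m) = q + 1 from by ring]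
        exact sub_emem m _ _ (caseB4a m hm q)
      · exact sub_emem m _ _ (caseB4b m hm q)
    · refine key m hm _ _ (q + 1) (sigk_fix_rr m hp1) (sigk_fix_rr m (Ne.symm e1))
        _ _ (Or.inr ⟨{q + 1, q + 2}, even_pair m (fun h => e21 h.symm), rfl⟩)
        (Or.inr ⟨∅, even_empty_card m, rfl⟩) ?_ ?_
      · rw [show (q + 1 - 1 : ZMod m) = q from by ring]
        exact sub_emem m _ _ (caseB3a m hm hpq hp1)
      · exact sub_emem m _ _ (caseB3b m hm hpq hp1)
  · -- u = inl inr p, v = inr bv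
    have e1 : p + 1 ≠ p := zadd_ne m p h1
    have e2 : p + 2 ≠ p := zadd_ne m p h2
    have e21 : p + 2 ≠ p + 1 := by
      rw [show (p + 2 : ZMod m) = (p + 1) + 1 by ring]
      exact zadd_ne m (p + 1) h1
    cases bv
    · -- v = 0 : case C6, k = p+1
      refine key m hm _ _ (p + 1) (sigk_fix_rr m (Ne.symm e1)) rfl
        _ _ (Or.inr ⟨{p + 1, p + 2}, even_pair m (fun h => e21 h.symm), rfl⟩)
        (Or.inr ⟨∅, even_empty_card m, rfl⟩) ?_ ?_
      · rw [show (p + 1 - 1 : ZMod m) = p from by ring]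
        exact sub_vz m _ (caseC6a m hm p)
      · exact sub_vz m _ (caseC6b m hm p)
    · -- v = 0' : case C2, k = p+2
      refine key m hm _ _ (p + 2) (sigk_fix_rr m (Ne.symm e2)) rfl
        _ _ (Or.inl rfl) (Or.inl rfl) ?_ ?_
      · rw [show (p + 2 - 1 : ZMod m) = p + 1 from by ring]
        refine sub_two_vtrue m _ (inl_mem_bigB m ?_)
        rw [mem_Fblock]
        exact ⟨by simp, by simp [Ne.symm e1],
          by simp [Ne.symm e2, show (p + 1 + 1 : ZMod m) = p + 2 from by ring]⟩
      · refine sub_two_vtrue m _ (inl_mem_bigB m ?_)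
        rw [mem_Hset, show (p + 2 - 1 : ZMod m) = p + 1 from by ring]
        exact ⟨by simp, by simp [Ne.symm e1], by simp⟩
  · -- u = inr bu, v = inl inl q
    have e1 : q + 1 ≠ q := zadd_ne m q h1
    have e2 : q + 2 ≠ q := zadd_ne m q h2
    cases bu
    · -- u = 0 : case C7, k = q+1
      refine key m hm _ _ (q + 1) rfl (sigk_fix_ll m (Ne.symm e1))
        _ _ (Or.inr ⟨{q, q + 1}, even_pair m (Ne.symm e1), rfl⟩)
        (Or.inr ⟨{q, q + 2}, even_pair m (Ne.symm e2), rfl⟩) ?_ ?_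
      · rw [show (q + 1 - 1 : ZMod m) = q from by ring]
        exact sub_ufalse m _ (caseC7a m hm q)
      · exact sub_ufalse m _ (caseC7b m hm q)
    · -- u = 0' : case C3, k = q+2
      refine key m hm _ _ (q + 2) rfl (sigk_fix_ll m (Ne.symm e2))
        _ _ (Or.inl rfl) (Or.inl rfl) ?_ ?_
      · rw [show (q + 2 - 1 : ZMod m) = q + 1 from by ring]
        refine sub_two_utrue m _ ?_
        rw [mem_Fblock]
        exact ⟨by simp [Ne.symm e1], by simp, by simp⟩
      · refine sub_two_utrue m _ ?_
        rw [mem_Hset, show (q + 2 - 1 : ZMod m) = q + 1 from by ring]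
        exact ⟨by simp [Ne.symm e1], by simp, by simp [Ne.symm e2]⟩
  · -- u = inr bu, v = inl inr q
    have e1 : q + 1 ≠ q := zadd_ne m q h1
    have e2 : q + 2 ≠ q := zadd_ne m q h2
    have e21 : q + 2 ≠ q + 1 := by
      rw [show (q + 2 : ZMod m) = (q + 1) + 1 by ring]
      exact zadd_ne m (q + 1) h1
    cases bu
    · -- u = 0 : case C8, k = q+1
      refine key m hm _ _ (q + 1) rfl (sigk_fix_rr m (Ne.symm e1))
        _ _ (Or.inr ⟨{q + 1, q + 2}, even_pair m (fun h => e21 h.symm), rfl⟩)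
        (Or.inr ⟨∅, even_empty_card m, rfl⟩) ?_ ?_
      · rw [show (q + 1 - 1 : ZMod m) = q from by ring]
        exact sub_ufalse m _ (caseC8a m hm q)
      · exact sub_ufalse m _ (caseC8b m hm q)
    · -- u = 0' : case C4, k = q+2
      refine key m hm _ _ (q + 2) rfl (sigk_fix_rr m (Ne.symm e2))
        _ _ (Or.inl rfl) (Or.inl rfl) ?_ ?_
      · rw [show (q + 2 - 1 : ZMod m) = q + 1 from by ring]
        refine sub_two_utrue m _ ?_
        rw [mem_Fblock]
        exact ⟨by simp, by simp [Ne.symm e1],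
          by simp [Ne.symm e2, show (q + 1 + 1 : ZMod m) = q + 2 from by ring]⟩
      · refine sub_two_utrue m _ ?_
        rw [mem_Hset, show (q + 2 - 1 : ZMod m) = q + 1 from by ring]
        exact ⟨by simp, by simp [Ne.symm e1], by simp⟩
  · -- u = inr bu, v = inr bv
    cases bu <;> cases bv
    · exact absurd rfl huv
    · -- u = 0, v = 0' : A1, k = 0
      refine key m hm _ _ 0 rfl rfl _ _ (Or.inl rfl) (Or.inl rfl) ?_ ?_
      · exact sub_two_vtrue m _ (Finset.mem_insert_self _ _)
      · exact sub_two_vtrue m _ (Finset.mem_insert_self _ _)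
    · -- u = 0', v = 0 : A2, k = 0
      refine key m hm _ _ 0 rfl rfl _ _ (Or.inl rfl) (Or.inl rfl) ?_ ?_
      · intro x hx
        rw [identifyBlock_two_vfalse] at hx
        rw [identifyBlock_bigB_vz]
        simp only [Finset.mem_insert, Finset.mem_singleton] at hx
        rcases hx with rfl | rfl <;> exact Finset.mem_insert_self _ _
      · intro x hx
        rw [identifyBlock_two_vfalse] at hx
        rw [identifyBlock_bigB_vz]
        simp only [Finset.mem_insert, Finset.mem_singleton] at hx
        rcases hx with rfl | rfl <;> exact Finset.mem_insert_self _ _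
    · exact absurd rfl huv
end

section
/- Let m ≥ 1 and let X₁, Y₁, X₂, Y₂ ⊆ {1,…,m} with X₁ ∩ Y₁ = ∅ and X₂ ∩ Y₂ = ∅. Then either rot(X₁,Y₁) = rot(X₂,Y₂) or rot(X₁,Y₁) ∩ rot(X₂,Y₂) = ∅. -/
/-- The family `⟨X, Y⟩` of all `J ⊆ E_m` such that for `x ∈ X` both `x, x' ∈ J`,
for `y ∈ Y` neither `y` nor `y'` is in `J`, and for all other `z` exactly one of
`z, z'` is in `J`. -/
def XYfam (m : ℕ) (X Y : Finset (ZMod m)) : Set (Finset (Em m)) :=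
  {J | (∀ x ∈ X, Sum.inl x ∈ J ∧ Sum.inr x ∈ J) ∧
       (∀ y ∈ Y, Sum.inl y ∉ J ∧ Sum.inr y ∉ J) ∧
       ∀ z : ZMod m, z ∉ X → z ∉ Y → Xor' (Sum.inl z ∈ J) (Sum.inr z ∈ J)}

/-- The rotated family `rot(X, Y) = ⋃_{q} ⟨X + q, Y + q⟩`. -/
def rotFam (m : ℕ) (X Y : Finset (ZMod m)) : Set (Finset (Em m)) :=
  ⋃ q : ZMod m, XYfam m (X.image (· + q)) (Y.image (· + q))

lemma memX_iff {m : ℕ} {X Y : Finset (ZMod m)} (h : Disjoint X Y)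
    {J : Finset (Em m)} (hJ : J ∈ XYfam m X Y) (z : ZMod m) :
    z ∈ X ↔ (Sum.inl z ∈ J ∧ Sum.inr z ∈ J) := by
  obtain ⟨hX, hY, hZ⟩ := hJ
  constructor
  · exact hX z
  · intro hz
    by_contra hzX
    by_cases hzY : z ∈ Y
    · exact (hY z hzY).1 hz.1
    · rcases hZ z hzX hzY with ⟨_, h'⟩ | ⟨_, h'⟩
      · exact h' hz.2
      · exact h' hz.1

lemma memY_iff {m : ℕ} {X Y : Finset (ZMod m)} (h : Disjoint X Y)
    {J : Finset (Em m)} (hJ : J ∈ XYfam m X Y) (z : ZMod m) :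
    z ∈ Y ↔ (Sum.inl z ∉ J ∧ Sum.inr z ∉ J) := by
  obtain ⟨hX, hY, hZ⟩ := hJ
  constructor
  · exact hY z
  · intro hz
    by_contra hzY
    by_cases hzX : z ∈ X
    · exact hz.1 (hX z hzX).1
    · rcases hZ z hzX hzY with ⟨h', _⟩ | ⟨h', _⟩
      · exact hz.1 h'
      · exact hz.2 h'

lemma rot_shift (m : ℕ) (X Y : Finset (ZMod m)) (r : ZMod m) :
    rotFam m (X.image (· + r)) (Y.image (· + r)) = rotFam m X Y := by
  have key : ∀ (S : Finset (ZMod m)) (q : ZMod m),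
      (S.image (· + r)).image (· + q) = S.image (· + (r + q)) := by
    intro S q
    rw [Finset.image_image]
    congr 1
    funext x
    simp [add_assoc]
  unfold rotFam
  ext J
  simp only [Set.mem_iUnion, key]
  constructor
  · rintro ⟨q, hq⟩
    exact ⟨r + q, hq⟩
  · rintro ⟨q, hq⟩
    refine ⟨q - r, ?_⟩
    simpa [add_sub_cancel] using hq

/-- Let `m ≥ 1` and `X₁, Y₁, X₂, Y₂ ⊆ {1,…,m}` with `X₁ ∩ Y₁ = ∅` and `X₂ ∩ Y₂ = ∅`.
Then either `rot(X₁,Y₁) = rot(X₂,Y₂)` or `rot(X₁,Y₁) ∩ rot(X₂,Y₂) = ∅`. -/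
theorem statement7 (m : ℕ) (hm : 1 ≤ m) (X₁ Y₁ X₂ Y₂ : Finset (ZMod m))
    (h1 : Disjoint X₁ Y₁) (h2 : Disjoint X₂ Y₂) :
    rotFam m X₁ Y₁ = rotFam m X₂ Y₂ ∨ rotFam m X₁ Y₁ ∩ rotFam m X₂ Y₂ = ∅ := by
  by_cases h : (rotFam m X₁ Y₁ ∩ rotFam m X₂ Y₂).Nonempty
  · left
    obtain ⟨J, hJ1, hJ2⟩ := h
    simp only [rotFam, Set.mem_iUnion] at hJ1 hJ2
    obtain ⟨q₁, hq₁⟩ := hJ1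
    obtain ⟨q₂, hq₂⟩ := hJ2
    have inj : ∀ q : ZMod m, Function.Injective (· + q) := fun q => add_left_injective q
    have d1 : Disjoint (X₁.image (· + q₁)) (Y₁.image (· + q₁)) :=
      (Finset.disjoint_image (inj q₁)).mpr h1
    have d2 : Disjoint (X₂.image (· + q₂)) (Y₂.image (· + q₂)) :=
      (Finset.disjoint_image (inj q₂)).mpr h2
    have hX : X₁.image (· + q₁) = X₂.image (· + q₂) := by
      ext z
      rw [memX_iff d1 hq₁ z, memX_iff d2 hq₂ z]
    have hY : Y₁.image (· + q₁) = Y₂.image (· + q₂) := by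
      ext z
      rw [memY_iff d1 hq₁ z, memY_iff d2 hq₂ z]
    calc rotFam m X₁ Y₁
        = rotFam m (X₁.image (· + q₁)) (Y₁.image (· + q₁)) := (rot_shift m X₁ Y₁ q₁).symm
      _ = rotFam m (X₂.image (· + q₂)) (Y₂.image (· + q₂)) := by rw [hX, hY]
      _ = rotFam m X₂ Y₂ := rot_shift m X₂ Y₂ q₂
  · right
    exact Set.not_nonempty_iff_eq_empty.mp h
end

section
/- Let m ≥ 3 be odd, and let X, Y ⊆ {1,…,m} be disjoint sets with |X| = |Y| ≥ 1. If J ∈ rot(X,Y), then the complement E_m ∖ J does not belong to rot(X,Y). -/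
/-- Shifting images: if `A + q = B + p` then `A + (q - p) = B`. -/
lemma shift_eq {m : ℕ} (A B : Finset (ZMod m)) (q p : ZMod m)
    (h : A.image (· + q) = B.image (· + p)) : A.image (· + (q - p)) = B := by
  have hinj : Function.Injective (fun x : ZMod m => x + p) := fun a b h => by simpa using h
  apply Finset.image_injective hinj
  rw [Finset.image_image]
  have : ((fun x : ZMod m => x + p) ∘ (· + (q - p))) = (· + q) := by
    funext x; simp [Function.comp]; ring
  rw [this, h]

/-- Let `m ≥ 3` be odd, and let `X, Y ⊆ {1,…,m}` be disjoint sets with `|X| = |Y| ≥ 1`.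
If `J ∈ rot(X,Y)`, then the complement `E_m ∖ J` does not belong to `rot(X,Y)`. -/
theorem statement9 (m : ℕ) (hm : 3 ≤ m) (hodd : Odd m) (X Y : Finset (ZMod m))
    (hdisj : Disjoint X Y) (hcard : X.card = Y.card) (hpos : 1 ≤ X.card)
    (J : Finset (Em m)) (hJ : J ∈ rotFam m X Y) :
    letI : NeZero m := ⟨by omega⟩
    Jᶜ ∉ rotFam m X Y := by
  have hNZ : NeZero m := ⟨by omega⟩
  intro hJc
  obtain ⟨q, hq⟩ := Set.mem_iUnion.mp hJ
  obtain ⟨p, hp⟩ := Set.mem_iUnion.mp hJc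
  obtain ⟨hq1, hq2, hq3⟩ := hq
  obtain ⟨hp1, hp2, hp3⟩ := hp
  have hinj : ∀ r : ZMod m, Function.Injective (fun x : ZMod m => x + r) :=
    fun r a b h => by simpa using h
  have hXY : X.image (· + q) ⊆ Y.image (· + p) := by
    intro x hx
    obtain ⟨h1, h2⟩ := hq1 x hx
    by_contra hxY
    by_cases hxX : x ∈ X.image (· + p)
    · exact Finset.mem_compl.mp (hp1 x hxX).1 h1
    · have := hp3 x hxX hxY
      simp [Finset.mem_compl, h1, h2, Xor'] at this
  have hYX : Y.image (· + q) ⊆ X.image (· + p) := by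
    intro y hy
    obtain ⟨h1, h2⟩ := hq2 y hy
    by_contra hyX
    by_cases hyY : y ∈ Y.image (· + p)
    · exact (hp2 y hyY).1 (Finset.mem_compl.mpr h1)
    · have := hp3 y hyX hyY
      simp [Finset.mem_compl, h1, h2, Xor'] at this
  have hXYe : X.image (· + q) = Y.image (· + p) := by
    apply Finset.eq_of_subset_of_card_le hXY
    rw [Finset.card_image_of_injective _ (hinj q),
        Finset.card_image_of_injective _ (hinj p), hcard]
  have hYXe : Y.image (· + q) = X.image (· + p) := by
    apply Finset.eq_of_subset_of_card_le hYX
    rw [Finset.card_image_of_injective _ (hinj q),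
        Finset.card_image_of_injective _ (hinj p), hcard]
  set d : ZMod m := q - p with hd
  have hX1 : X.image (· + d) = Y := shift_eq X Y q p hXYe
  have hY1 : Y.image (· + d) = X := shift_eq Y X q p hYXe
  have key : ∀ n : ℕ, X.image (· + (n : ZMod m) * d) = (if Even n then X else Y) := by
    intro n
    induction n with
    | zero => simp
    | succ n ih =>
      have e1 : (((n + 1 : ℕ) : ZMod m)) * d = ((n : ZMod m)) * d + d := by
        push_cast; ring
      have e2 : X.image (· + ((n + 1 : ℕ) : ZMod m) * d)
          = (X.image (· + (n : ZMod m) * d)).image (· + d) := by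
        rw [Finset.image_image]
        congr 1
        funext x
        simp [Function.comp, e1, add_assoc]
        ring
      rw [e2, ih]
      by_cases hn : Even n
      · simp [hn, Nat.even_add_one, hX1]
      · simp [hn, Nat.even_add_one, hY1]
  have hm0 : ((m : ZMod m)) * d = 0 * d := by
    rw [ZMod.natCast_self]
  have hX_eq_Y : X = Y := by
    have := key m
    rw [hm0] at this
    simp [Nat.not_even_iff_odd.mpr hodd] at this
    simpa using this
  rw [hX_eq_Y] at hdisj
  have : Y = ∅ := by simpa using disjoint_self.mp hdisj
  rw [hX_eq_Y, this] at hpos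
  simp at hpos
end

section
/- Let 𝒜 be a Sperner system over a finite set A and let I be any two-element subset of A. Then |U_{𝒜*_I}| ≤ |U_𝒜|, and the inequality is strict if and only if I ⊆ U_𝒜. -/
section Aux

variable {α : Type*} [DecidableEq α]

lemma mem_identifyBlock_of {u v x : α} {S : Finset α} (hx : x ∈ S) (hxv : x ≠ v) :
    x ∈ identifyBlock u v S := by
  unfold identifyBlock
  split_ifs with h
  · exact Finset.mem_insert_of_mem (Finset.mem_erase.mpr ⟨hxv, hx⟩)
  · exact hx

lemma minimals_eq_self {F : Finset (Finset α)} (h : IsSperner F) : minimals F = F := by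
  unfold minimals
  apply Finset.filter_true_of_mem
  intro S hS T hT hTS
  exact h T hT S hS hTS

end Aux

/-- Let `𝒜` be a Sperner system over a finite set `A` and let `I = {u, v}` be a
two-element subset of `A`. Then `|U_{𝒜*_I}| ≤ |U_𝒜|`, and the inequality is strict if
and only if `I ⊆ U_𝒜` (where `U_ℱ` denotes the union of the blocks of `ℱ`). -/
theorem statement14 {α : Type*} [DecidableEq α] (A : Finset α) (F : Finset (Finset α))
    (hsub : ∀ S ∈ F, S ⊆ A) (hsp : IsSperner F)
    (u v : α) (hu : u ∈ A) (hv : v ∈ A) (huv : u ≠ v) :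
    ((starMinor u v F).sup id).card ≤ (F.sup id).card ∧
      (((starMinor u v F).sup id).card < (F.sup id).card ↔
        ({u, v} : Finset α) ⊆ F.sup id) := by
  classical
  set U := F.sup id with hUdef
  -- Lemma A: union of starMinor is contained in insert u (U.erase v)
  have hA : (starMinor u v F).sup id ⊆ insert u (U.erase v) := by
    intro x hx
    rw [Finset.mem_sup] at hx
    obtain ⟨T, hT, hxT⟩ := hx
    have hT' : T ∈ identifySystem u v F := Finset.mem_of_mem_filter T hT
    rw [identifySystem, Finset.mem_image] at hT'
    obtain ⟨S, hS, rfl⟩ := hT'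
    have hSU : S ⊆ U := Finset.le_sup (f := id) hS
    simp only [id] at hxT
    unfold identifyBlock at hxT
    split_ifs at hxT with hvS
    · rcases Finset.mem_insert.mp hxT with rfl | h
      · exact Finset.mem_insert_self _ _
      · exact Finset.mem_insert_of_mem
          (Finset.mem_erase.mpr ⟨(Finset.mem_erase.mp h).1, hSU (Finset.mem_erase.mp h).2⟩)
    · exact Finset.mem_insert_of_mem
        (Finset.mem_erase.mpr ⟨fun h => hvS (h ▸ hxT), hSU hxT⟩)
  by_cases hvU : v ∈ U
  · by_cases huU : u ∈ U
    · -- both in U : strict inequality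
      have huv' : u ∈ U.erase v := Finset.mem_erase.mpr ⟨huv, huU⟩
      have h1 : ((starMinor u v F).sup id).card < U.card := by
        calc ((starMinor u v F).sup id).card ≤ (insert u (U.erase v)).card :=
              Finset.card_le_card hA
          _ = (U.erase v).card := by rw [Finset.insert_eq_self.mpr huv']
          _ < U.card := Finset.card_erase_lt_of_mem hvU
      exact ⟨h1.le, ⟨fun _ => Finset.insert_subset huU (Finset.singleton_subset_iff.mpr hvU),
        fun _ => h1⟩⟩
    · -- v ∈ U, u ∉ U : equality
      have key : ∀ S ∈ F, ∀ T ∈ F,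
          identifyBlock u v T ⊆ identifyBlock u v S → T ⊆ S := by
        intro S hS T hT hsub'
        have huS : u ∉ S := fun h => huU (Finset.le_sup (f := id) hS h)
        intro x hxT
        by_cases hxv : x = v
        · have huT : u ∈ identifyBlock u v T := by
            unfold identifyBlock
            rw [if_pos (hxv ▸ hxT)]
            exact Finset.mem_insert_self _ _
          have huS' := hsub' huT
          unfold identifyBlock at huS'
          split_ifs at huS' with hvS
          · exact hxv ▸ hvS
          · exact absurd huS' huS
        · have hx' := hsub' (mem_identifyBlock_of hxT hxv)
          unfold identifyBlock at hx'
          split_ifs at hx' with hvS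
          · rcases Finset.mem_insert.mp hx' with rfl | h
            · exact absurd (Finset.le_sup (f := id) hT hxT) huU
            · exact Finset.mem_of_mem_erase h
          · exact hx'
      have hsp' : IsSperner (identifySystem u v F) := by
        intro S' hS' T' hT' hsub'
        rw [identifySystem, Finset.mem_image] at hS' hT'
        obtain ⟨S, hS, rfl⟩ := hS'
        obtain ⟨T, hT, rfl⟩ := hT'
        rw [hsp S hS T hT (key T hT S hS hsub')]
      have hstar : starMinor u v F = identifySystem u v F := minimals_eq_self hsp'
      have hsup : (starMinor u v F).sup id = insert u (U.erase v) := by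
        apply Finset.Subset.antisymm hA
        rw [hstar]
        intro x hx
        rw [Finset.mem_sup]
        rcases Finset.mem_insert.mp hx with hxu | hx'
        · rw [hUdef, Finset.mem_sup] at hvU
          obtain ⟨S, hS, hvS⟩ := hvU
          refine ⟨identifyBlock u v S, Finset.mem_image_of_mem _ hS, ?_⟩
          simp only [id] at hvS ⊢
          unfold identifyBlock
          rw [if_pos hvS, hxu]
          exact Finset.mem_insert_self _ _
        · obtain ⟨hxv, hxU⟩ := Finset.mem_erase.mp hx'
          rw [hUdef, Finset.mem_sup] at hxU
          obtain ⟨S, hS, hxS⟩ := hxU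
          simp only [id] at hxS ⊢
          exact ⟨identifyBlock u v S, Finset.mem_image_of_mem _ hS,
            mem_identifyBlock_of hxS hxv⟩
      have hcard : ((starMinor u v F).sup id).card = U.card := by
        rw [hsup, Finset.card_insert_of_notMem (fun h => huU (Finset.mem_of_mem_erase h)),
          Finset.card_erase_of_mem hvU]
        have : 0 < U.card := Finset.card_pos.mpr ⟨v, hvU⟩
        omega
      refine ⟨hcard.le, ?_, ?_⟩
      · intro h; omega
      · intro h
        exact absurd (h (Finset.mem_insert_self u {v})) huU
  · -- v ∉ U : starMinor = F
    have hid : identifySystem u v F = F := by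
      unfold identifySystem
      rw [show F.image (identifyBlock u v) = F.image id from Finset.image_congr ?_,
        Finset.image_id]
      intro S hS
      have : v ∉ S := fun h => hvU (Finset.le_sup (f := id) hS h)
      simp [identifyBlock, this]
    have hstar : starMinor u v F = F := by
      rw [starMinor, hid, minimals_eq_self hsp]
    rw [hstar]
    refine ⟨le_rfl, ?_, ?_⟩
    · intro h; exact absurd rfl h.ne
    · intro h
      exact absurd (h (Finset.mem_insert_of_mem (Finset.mem_singleton_self v))) hvU
end

section
/- Let n ≥ 4 and let f : {0,1}ⁿ → {0,1} be a Boolean function that is either constant, or of the form f(x₁,…,xₙ) = ⋀_{i∈S} x_i for some nonempty S ⊆ {1,…,n} (f belongs to the clone Λ of conjunctions), or of the form f(x₁,…,xₙ) = ⋁_{i∈S} x_i for some nonempty S ⊆ {1,…,n} (f belongs to the clone V of disjunctions). Then f is reconstructible: every function g : {0,1}ⁿ → {0,1} that has the same deck as f is equivalent to f. -/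
section Functions

/-- The index map `δ_I : {1,…,n} → {1,…,n−1}` for `I = {i, j}` with `i < j`. -/
def deltaMap {n : ℕ} (i j : Fin n) (h : (i : ℕ) < (j : ℕ)) : Fin n → Fin (n - 1) :=
  fun t =>
    if h1 : (t : ℕ) < (j : ℕ) then ⟨(t : ℕ), by have hj := j.isLt; omega⟩
    else if h2 : (t : ℕ) = (j : ℕ) then ⟨(i : ℕ), by have hj := j.isLt; omega⟩
    else ⟨(t : ℕ) - 1, by have ht := t.isLt; omega⟩

/-- The identification minor `f_I` of `f` for `I = {i, j}` with `i < j`: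
`f_I(a₁,…,a_{n−1}) = f(a₁,…,a_{j−1}, a_i, a_j,…,a_{n−1})`. -/
def idMinor {n : ℕ} {A B : Type*} (f : (Fin n → A) → B) (i j : Fin n)
    (h : (i : ℕ) < (j : ℕ)) : (Fin (n - 1) → A) → B :=
  fun a => f (a ∘ deltaMap i j h)

/-- Two functions of the same arity are equivalent if one is obtained from the other
by permuting the arguments. -/
def FnEquiv {k : ℕ} {A B : Type*} (f g : (Fin k → A) → B) : Prop :=
  ∃ σ : Fin k ≃ Fin k, ∀ a, f a = g (a ∘ σ)

/-- Two `n`-ary functions have the same deck if there is a bijection `φ` of the set of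
two-element subsets of `{1,…,n}` (modelled as ordered pairs `i < j`) such that `f_I` is
equivalent to `g_{φ I}` for every such `I`. -/
def SameDeck {n : ℕ} {A B : Type*} (f g : (Fin n → A) → B) : Prop :=
  ∃ φ : {p : Fin n × Fin n // (p.1 : ℕ) < (p.2 : ℕ)} ≃
        {p : Fin n × Fin n // (p.1 : ℕ) < (p.2 : ℕ)},
    ∀ p : {p : Fin n × Fin n // (p.1 : ℕ) < (p.2 : ℕ)},
      FnEquiv (idMinor f p.1.1 p.1.2 p.2) (idMinor g (φ p).1.1 (φ p).1.2 (φ p).2)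

end Functions

namespace S17

def liftMap {n : ℕ} (j : Fin n) : Fin (n - 1) → Fin n :=
  fun k => if _ : (k : ℕ) < (j : ℕ) then ⟨k, by have := k.isLt; omega⟩
           else ⟨(k : ℕ) + 1, by have := k.isLt; omega⟩


lemma liftMap_val {n : ℕ} (j : Fin n) (k : Fin (n-1)) :
    ((liftMap j k : Fin n) : ℕ) = if (k : ℕ) < (j : ℕ) then (k : ℕ) else (k : ℕ) + 1 := by
  unfold liftMap; split_ifs <;> rfl

lemma deltaMap_val {n : ℕ} (i j : Fin n) (h : (i : ℕ) < (j : ℕ)) (t : Fin n) :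
    ((deltaMap i j h t : Fin (n-1)) : ℕ) =
      if (t : ℕ) < (j : ℕ) then (t : ℕ) else if (t : ℕ) = (j : ℕ) then (i : ℕ) else (t : ℕ) - 1 := by
  unfold deltaMap; split_ifs <;> rfl

lemma liftMap_ne {n : ℕ} (j : Fin n) (k : Fin (n-1)) : liftMap j k ≠ j := by
  intro he; apply_fun Fin.val at he; rw [liftMap_val] at he; split_ifs at he <;> omega

lemma delta_lift {n : ℕ} (i j : Fin n) (h : (i : ℕ) < (j : ℕ)) (k : Fin (n-1)) :
    deltaMap i j h (liftMap j k) = k := by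
  have hk := k.isLt
  apply Fin.ext
  rw [deltaMap_val, liftMap_val]
  split_ifs <;> omega

lemma lift_delta' {n : ℕ} (i j : Fin n) (h : (i : ℕ) < (j : ℕ)) (t : Fin n) :
    liftMap j (deltaMap i j h t) = t ∨ (t = j ∧ liftMap j (deltaMap i j h t) = i) := by
  have ht := t.isLt
  by_cases h2 : (t : ℕ) = (j : ℕ)
  · right
    constructor
    · exact Fin.ext h2
    · apply Fin.ext; rw [liftMap_val, deltaMap_val]; split_ifs <;> omega
  · left; apply Fin.ext; rw [liftMap_val, deltaMap_val]; split_ifs <;> omega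

lemma lift_delta {n : ℕ} {A : Type*} (i j : Fin n) (h : (i : ℕ) < (j : ℕ))
    (a : Fin n → A) (hij : a i = a j) (t : Fin n) :
    a (liftMap j (deltaMap i j h t)) = a t := by
  rcases lift_delta' i j h t with he | ⟨hj, he⟩
  · rw [he]
  · rw [he, hij, hj]

lemma delta_apply_i {n : ℕ} (i j : Fin n) (h : (i : ℕ) < (j : ℕ)) :
    deltaMap i j h i = ⟨i, by have := j.isLt; omega⟩ := by
  apply Fin.ext; rw [deltaMap_val]; simp only [Fin.val_mk]; split_ifs <;> omega

lemma delta_apply_j {n : ℕ} (i j : Fin n) (h : (i : ℕ) < (j : ℕ)) :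
    deltaMap i j h j = ⟨i, by have := j.isLt; omega⟩ := by
  apply Fin.ext; rw [deltaMap_val]; simp only [Fin.val_mk]; split_ifs <;> omega

lemma delta_inj {n : ℕ} (i j : Fin n) (h : (i : ℕ) < (j : ℕ)) {t t' : Fin n}
    (he : deltaMap i j h t = deltaMap i j h t') :
    t = t' ∨ (t = i ∧ t' = j) ∨ (t = j ∧ t' = i) := by
  apply_fun Fin.val at he
  rw [deltaMap_val, deltaMap_val] at he
  have ht := t.isLt; have ht' := t'.isLt
  have hveq : (t : ℕ) = (t' : ℕ) ∨ ((t:ℕ) = i ∧ (t':ℕ) = j) ∨ ((t:ℕ) = j ∧ (t':ℕ) = i) := by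
    split_ifs at he <;> omega
  rcases hveq with h1 | ⟨h1, h2⟩ | ⟨h1, h2⟩
  · exact Or.inl (Fin.ext h1)
  · exact Or.inr (Or.inl ⟨Fin.ext h1, Fin.ext h2⟩)
  · exact Or.inr (Or.inr ⟨Fin.ext h1, Fin.ext h2⟩)


/-- An AND function determines its index set. -/
lemma and_ext {m : ℕ} {A B : Finset (Fin m)}
    (h : ∀ a : Fin m → Bool, (∀ k ∈ A, a k = true) ↔ (∀ k ∈ B, a k = true)) : A = B := by
  ext k
  have hk := h (fun s => !(decide (s = k)))
  simp only [Bool.not_eq_true', decide_eq_false_iff_not] at hk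
  constructor
  · intro hkA
    by_contra hkB
    exact (hk.mpr (fun j hj => by rintro rfl; exact hkB hj)) k hkA rfl
  · intro hkB
    by_contra hkA
    exact (hk.mp (fun j hj => by rintro rfl; exact hkA hj)) k hkB rfl

lemma minor_and {n : ℕ} {f : (Fin n → Bool) → Bool} {S : Finset (Fin n)}
    (hfS : ∀ a, f a = true ↔ ∀ i ∈ S, a i = true) (i j : Fin n) (h : (i : ℕ) < (j : ℕ)) :
    ∀ b, idMinor f i j h b = true ↔ ∀ k ∈ S.image (deltaMap i j h), b k = true := by
  intro b
  rw [idMinor, hfS]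
  simp [Finset.forall_mem_image]

lemma fnequiv_and {m : ℕ} {F G : (Fin m → Bool) → Bool} {A B : Finset (Fin m)}
    (hF : ∀ a, F a = true ↔ ∀ k ∈ A, a k = true)
    (hG : ∀ a, G a = true ↔ ∀ k ∈ B, a k = true)
    (h : FnEquiv F G) : A.card = B.card := by
  obtain ⟨σ, hσ⟩ := h
  have : A = B.image σ := by
    apply and_ext
    intro a
    rw [← hF a, hσ a, hG]
    simp only [Finset.forall_mem_image, Function.comp_apply]
  rw [this, Finset.card_image_of_injective _ σ.injective]

lemma card_image_delta {n : ℕ} (i j : Fin n) (h : (i : ℕ) < (j : ℕ)) (S : Finset (Fin n)) :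
    (S.image (deltaMap i j h)).card = if i ∈ S ∧ j ∈ S then S.card - 1 else S.card := by
  have hij : i ≠ j := by intro he; rw [he] at h; omega
  split_ifs with hb
  · have himg : S.image (deltaMap i j h) = (S.erase j).image (deltaMap i j h) := by
      apply Finset.Subset.antisymm
      · intro k hk
        simp only [Finset.mem_image] at hk ⊢
        obtain ⟨t, ht, rfl⟩ := hk
        by_cases htj : t = j
        · refine ⟨i, Finset.mem_erase.mpr ⟨hij, hb.1⟩, ?_⟩
          rw [htj, delta_apply_i, delta_apply_j]
        · exact ⟨t, Finset.mem_erase.mpr ⟨htj, ht⟩, rfl⟩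
      · exact Finset.image_subset_image (Finset.erase_subset _ _)
    rw [himg, Finset.card_image_of_injOn, Finset.card_erase_of_mem hb.2]
    intro t ht t' ht' he
    rcases delta_inj i j h he with h1 | ⟨h1, h2⟩ | ⟨h1, h2⟩
    · exact h1
    · exact absurd (Finset.mem_erase.mp (h2 ▸ ht')).1 (by simp)
    · exact absurd (Finset.mem_erase.mp (h1 ▸ ht)).1 (by simp)
  · rw [Finset.card_image_of_injOn]
    intro t ht t' ht' he
    rcases delta_inj i j h he with h1 | ⟨h1, h2⟩ | ⟨h1, h2⟩
    · exact h1
    · exact absurd ⟨h1 ▸ ht, h2 ▸ ht'⟩ hb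
    · exact absurd ⟨h2 ▸ ht', h1 ▸ ht⟩ hb


lemma and_case {n : ℕ} (hn : 4 ≤ n) (f g : (Fin n → Bool) → Bool)
    (S : Finset (Fin n)) (hS : S.Nonempty)
    (hfS : ∀ a, f a = true ↔ ∀ i ∈ S, a i = true)
    (hdeck : SameDeck f g) : FnEquiv f g := by
  classical
  obtain ⟨φ, hφ⟩ := hdeck
  -- Every identification minor of g is an AND over a nonempty set.
  have key : ∀ q : {p : Fin n × Fin n // (p.1 : ℕ) < (p.2 : ℕ)},
      ∃ W : Finset (Fin (n-1)), W.Nonempty ∧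
        (∀ b, idMinor g q.1.1 q.1.2 q.2 b = true ↔ ∀ k ∈ W, b k = true) := by
    intro q
    obtain ⟨p, rfl⟩ : ∃ p, φ p = q := ⟨φ.symm q, Equiv.apply_symm_apply φ q⟩
    obtain ⟨σ, hσ⟩ := hφ p
    refine ⟨(S.image (deltaMap p.1.1 p.1.2 p.2)).image σ.symm, (hS.image _).image _, ?_⟩
    intro b
    have hb : (b ∘ σ.symm) ∘ σ = b := by funext x; simp
    have h2 := hσ (b ∘ σ.symm)
    rw [hb] at h2
    rw [← h2, minor_and hfS]
    simp only [Finset.forall_mem_image, Function.comp_apply]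
  -- evaluation of `g` on tuples with a repetition
  have repeatEval : ∀ (i j : Fin n) (hij : (i:ℕ) < (j:ℕ)),
      ∃ U : Finset (Fin n), U.Nonempty ∧ j ∉ U ∧
        ∀ a : Fin n → Bool, a i = a j → (g a = true ↔ ∀ k ∈ U, a k = true) := by
    intro i j hij
    obtain ⟨W, hWne, hW⟩ := key ⟨(i, j), hij⟩
    refine ⟨W.image (liftMap j), hWne.image _, ?_, ?_⟩
    · intro hmem
      obtain ⟨k, -, hk⟩ := Finset.mem_image.mp hmem
      exact liftMap_ne j k hk
    · intro a ha
      have hg : g a = idMinor g i j hij (a ∘ liftMap j) := by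
        unfold idMinor
        congr 1
        funext t
        exact (lift_delta i j hij a ha t).symm
      rw [hg, hW]
      simp only [Finset.forall_mem_image, Function.comp_apply]
  choose U hUne hUj hU using repeatEval
  -- the candidate support of g
  set e : Fin n → Fin n → Bool := fun t s => !(decide (s = t)) with he
  set T : Finset (Fin n) := Finset.univ.filter (fun t => g (e t) = false) with hT
  have memT : ∀ t, t ∈ T ↔ g (e t) = false := by
    intro t; simp [hT]
  have L1 : ∀ (i j : Fin n) (hij : (i:ℕ) < (j:ℕ)) (t : Fin n), t ≠ i → t ≠ j →
      (t ∈ U i j hij ↔ t ∈ T) := by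
    intro i j hij t hti htj
    have ha : e t i = e t j := by
      simp [he, (Ne.symm hti : i ≠ t), (Ne.symm htj : j ≠ t)]
    have hev := hU i j hij (e t) ha
    have h2 : g (e t) = true ↔ t ∉ U i j hij := by
      rw [hev]
      constructor
      · intro hh htU
        have := hh t htU
        simp [he] at this
      · intro hh k hk
        simp only [he, Bool.not_eq_true', decide_eq_false_iff_not]
        rintro rfl
        exact hh hk
    rw [memT]
    constructor
    · intro htU
      rw [Bool.eq_false_iff]
      intro hg
      exact (h2.mp hg) htU
    · intro hg
      by_contra htU
      rw [h2.mpr htU] at hg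
      simp at hg
  have L2 : ∀ (i j : Fin n) (hij : (i:ℕ) < (j:ℕ)),
      ((i ∈ U i j hij ∨ j ∈ U i j hij) ↔ (i ∈ T ∨ j ∈ T)) := by
    intro i j hij
    set b : Fin n → Bool := fun s => !(decide (s = i) || decide (s = j)) with hb
    have hbij : b i = b j := by simp [hb]
    have h1 : g b = true ↔ (i ∉ U i j hij ∧ j ∉ U i j hij) := by
      rw [hU i j hij b hbij]
      constructor
      · intro hh
        constructor
        · intro hmem; have := hh i hmem; simp [hb] at this
        · intro hmem; have := hh j hmem; simp [hb] at this
      · rintro ⟨hh1, hh2⟩ k hk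
        simp only [hb, Bool.not_eq_true', Bool.or_eq_false_iff, decide_eq_false_iff_not]
        constructor
        · rintro rfl; exact hh1 hk
        · rintro rfl; exact hh2 hk
    obtain ⟨k, l, hkl, hki, hkj, hli, hlj⟩ :
        ∃ k l : Fin n, (k:ℕ) < (l:ℕ) ∧ k ≠ i ∧ k ≠ j ∧ l ≠ i ∧ l ≠ j := by
      have hcard : 1 < (Finset.univ \ {i, j} : Finset (Fin n)).card := by
        rw [Finset.card_sdiff_of_subset (Finset.subset_univ _), Finset.card_univ, Fintype.card_fin]
        have hc2 := Finset.card_insert_le i ({j} : Finset (Fin n))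
        simp only [Finset.card_singleton] at hc2
        omega
      obtain ⟨k, hk, l, hl, hkl⟩ := Finset.one_lt_card.mp hcard
      simp only [Finset.mem_sdiff, Finset.mem_univ, Finset.mem_insert,
        Finset.mem_singleton, true_and, not_or] at hk hl
      have hv : (k:ℕ) ≠ (l:ℕ) := fun hh => hkl (Fin.ext hh)
      rcases lt_or_gt_of_ne hv with h | h
      · exact ⟨k, l, h, hk.1, hk.2, hl.1, hl.2⟩
      · exact ⟨l, k, h, hl.1, hl.2, hk.1, hk.2⟩
    have hbkl : b k = b l := by simp [hb, hki, hkj, hli, hlj]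
    have h2 : g b = true ↔ (i ∉ T ∧ j ∉ T) := by
      rw [hU k l hkl b hbkl]
      constructor
      · intro hh
        constructor
        · intro hmem
          have hiU := (L1 k l hkl i (Ne.symm hki) (Ne.symm hli)).mpr hmem
          have := hh i hiU
          simp [hb] at this
        · intro hmem
          have hjU := (L1 k l hkl j (Ne.symm hkj) (Ne.symm hlj)).mpr hmem
          have := hh j hjU
          simp [hb] at this
      · rintro ⟨hh1, hh2⟩ m hm
        simp only [hb, Bool.not_eq_true', Bool.or_eq_false_iff, decide_eq_false_iff_not]
        constructor
        · rintro rfl; exact hh1 ((L1 k l hkl m (Ne.symm hki) (Ne.symm hli)).mp hm)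
        · rintro rfl; exact hh2 ((L1 k l hkl m (Ne.symm hkj) (Ne.symm hlj)).mp hm)
    have h3 := h1.symm.trans h2
    constructor
    · intro hor
      by_contra hn
      push_neg at hn
      exact hor.elim (h3.mpr hn).1 (h3.mpr hn).2
    · intro hor
      by_contra hn
      push_neg at hn
      exact hor.elim (h3.mp hn).1 (h3.mp hn).2
  -- g is the AND over T
  have gAnd : ∀ a, g a = true ↔ ∀ t ∈ T, a t = true := by
    intro a
    have hcard : Fintype.card Bool < Fintype.card (Fin n) := by
      simp only [Fintype.card_bool, Fintype.card_fin]; omega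
    obtain ⟨i, j, hne, hae⟩ := Fintype.exists_ne_map_eq_of_card_lt a hcard
    have main : ∀ (i j : Fin n) (hij : (i:ℕ)<(j:ℕ)), a i = a j →
        (g a = true ↔ ∀ t ∈ T, a t = true) := by
      intro i j hij hae
      rw [hU i j hij a hae]
      constructor
      · intro hh t htT
        by_cases hti : t = i
        · subst hti
          rcases (L2 t j hij).mpr (Or.inl htT) with hm | hm
          · exact hh t hm
          · rw [hae]; exact hh j hm
        · by_cases htj : t = j
          · subst htj
            rcases (L2 i t hij).mpr (Or.inr htT) with hm | hm
            · rw [← hae]; exact hh i hm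
            · exact hh t hm
          · exact hh t ((L1 i j hij t hti htj).mpr htT)
      · intro hh k hk
        by_cases hki : k = i
        · subst hki
          rcases (L2 k j hij).mp (Or.inl hk) with hm | hm
          · exact hh k hm
          · rw [hae]; exact hh j hm
        · by_cases hkj : k = j
          · subst hkj
            rcases (L2 i k hij).mp (Or.inr hk) with hm | hm
            · rw [← hae]; exact hh i hm
            · exact hh k hm
          · exact hh k ((L1 i j hij k hki hkj).mp hk)
    have hv : (i:ℕ) ≠ (j:ℕ) := fun hh => hne (Fin.ext hh)
    rcases lt_or_gt_of_ne hv with hij | hij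
    · exact main i j hij hae
    · exact main j i hij hae.symm
  -- T is nonempty
  have h01 : (((⟨0, by omega⟩ : Fin n)) : ℕ) < (((⟨1, by omega⟩ : Fin n)) : ℕ) := by
    show (0:ℕ) < 1; omega
  have hTne : T.Nonempty := by
    obtain ⟨u, hu⟩ := hUne _ _ h01
    by_cases hui : u = (⟨0, by omega⟩ : Fin n)
    · rcases (L2 _ _ h01).mp (Or.inl (hui ▸ hu)) with hm | hm
      · exact ⟨_, hm⟩
      · exact ⟨_, hm⟩
    · by_cases huj : u = (⟨1, by omega⟩ : Fin n)
      · rcases (L2 _ _ h01).mp (Or.inr (huj ▸ hu)) with hm | hm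
        · exact ⟨_, hm⟩
        · exact ⟨_, hm⟩
      · exact ⟨u, (L1 _ _ h01 u hui huj).mp hu⟩
  -- minors have matched support sizes
  have hval : ∀ p : {p : Fin n × Fin n // (p.1:ℕ) < (p.2:ℕ)},
      (if p.1.1 ∈ S ∧ p.1.2 ∈ S then S.card - 1 else S.card)
        = (if (φ p).1.1 ∈ T ∧ (φ p).1.2 ∈ T then T.card - 1 else T.card) := by
    intro p
    have hc := fnequiv_and (minor_and hfS p.1.1 p.1.2 p.2)
      (minor_and gAnd (φ p).1.1 (φ p).1.2 (φ p).2) (hφ p)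
    rwa [card_image_delta, card_image_delta] at hc
  have hs1 : 1 ≤ S.card := Finset.card_pos.mpr hS
  have ht1 : 1 ≤ T.card := Finset.card_pos.mpr hTne
  have h02 : (((⟨0, by omega⟩ : Fin n)) : ℕ) < (((⟨2, by omega⟩ : Fin n)) : ℕ) := by
    show (0:ℕ) < 2; omega
  set p1 : {p : Fin n × Fin n // (p.1:ℕ) < (p.2:ℕ)} := ⟨(⟨0, by omega⟩, ⟨1, by omega⟩), h01⟩
  set p2 : {p : Fin n × Fin n // (p.1:ℕ) < (p.2:ℕ)} := ⟨(⟨0, by omega⟩, ⟨2, by omega⟩), h02⟩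
  have hp12 : p1 ≠ p2 := by
    intro hh
    have := congrArg (fun x => ((x.1.2 : Fin n) : ℕ)) hh
    simp [p1, p2] at this
  -- |T| = |S|
  have hcards : T.card = S.card := by
    rcases Nat.lt_trichotomy T.card S.card with hst | h | hst
    · exfalso
      -- t < s
      have hall : ∀ p : {p : Fin n × Fin n // (p.1:ℕ) < (p.2:ℕ)},
          (p.1.1 ∈ S ∧ p.1.2 ∈ S) ∧ ¬((φ p).1.1 ∈ T ∧ (φ p).1.2 ∈ T) := by
        intro p
        have hv := hval p
        constructor
        · by_contra hbo
          rw [if_neg hbo] at hv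
          split_ifs at hv <;> omega
        · intro hbo
          rw [if_pos hbo] at hv
          split_ifs at hv <;> omega
      have ht : T.card = 1 := by
        by_contra h2
        obtain ⟨u, hu, v, hv2, huv⟩ := Finset.one_lt_card.mp (by omega : 1 < T.card)
        have hvne : (u:ℕ) ≠ (v:ℕ) := fun hh => huv (Fin.ext hh)
        have hq : ∀ q : {p : Fin n × Fin n // (p.1:ℕ) < (p.2:ℕ)},
            ¬(q.1.1 ∈ T ∧ q.1.2 ∈ T) := by
          intro q
          obtain ⟨p, rfl⟩ : ∃ p, φ p = q := ⟨φ.symm q, Equiv.apply_symm_apply φ q⟩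
          exact (hall p).2
        rcases lt_or_gt_of_ne hvne with h | h
        · exact hq ⟨(u,v), h⟩ ⟨hu, hv2⟩
        · exact hq ⟨(v,u), h⟩ ⟨hv2, hu⟩
      have hs2 : S.card = 2 := by
        have hv := hval p1
        rw [if_pos (hall p1).1, if_neg (hall p1).2] at hv
        omega
      have hm0 : (⟨0, by omega⟩ : Fin n) ∈ S := (hall p1).1.1
      have hm1 : (⟨1, by omega⟩ : Fin n) ∈ S := (hall p1).1.2
      have hm2 : (⟨2, by omega⟩ : Fin n) ∈ S := (hall p2).1.2
      have hsub : ({(⟨0, by omega⟩ : Fin n), ⟨1, by omega⟩, ⟨2, by omega⟩} : Finset (Fin n)) ⊆ S := by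
        intro x hx
        simp only [Finset.mem_insert, Finset.mem_singleton] at hx
        rcases hx with rfl | rfl | rfl
        exacts [hm0, hm1, hm2]
      have hc3 : ({(⟨0, by omega⟩ : Fin n), ⟨1, by omega⟩, ⟨2, by omega⟩} : Finset (Fin n)).card = 3 := by
        rw [Finset.card_insert_of_notMem (by simp [Fin.ext_iff]),
          Finset.card_insert_of_notMem (by simp [Fin.ext_iff]), Finset.card_singleton]
      have := Finset.card_le_card hsub
      omega
    · exact h
    · exfalso
      -- s < t
      have hall : ∀ p : {p : Fin n × Fin n // (p.1:ℕ) < (p.2:ℕ)},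
          ¬(p.1.1 ∈ S ∧ p.1.2 ∈ S) ∧ ((φ p).1.1 ∈ T ∧ (φ p).1.2 ∈ T) := by
        intro p
        have hv := hval p
        constructor
        · intro hbo
          rw [if_pos hbo] at hv
          split_ifs at hv <;> omega
        · by_contra hbo
          rw [if_neg hbo] at hv
          split_ifs at hv <;> omega
      have hs : S.card = 1 := by
        by_contra h2
        obtain ⟨u, hu, v, hv2, huv⟩ := Finset.one_lt_card.mp (by omega : 1 < S.card)
        have hvne : (u:ℕ) ≠ (v:ℕ) := fun hh => huv (Fin.ext hh)
        rcases lt_or_gt_of_ne hvne with h | h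
        · exact (hall ⟨(u,v), h⟩).1 ⟨hu, hv2⟩
        · exact (hall ⟨(v,u), h⟩).1 ⟨hv2, hu⟩
      have ht2 : T.card = 2 := by
        have hv := hval p1
        rw [if_neg (hall p1).1, if_pos (hall p1).2] at hv
        omega
      obtain ⟨u, v, huv, hTe⟩ := Finset.card_eq_two.mp ht2
      have hvne : (u:ℕ) ≠ (v:ℕ) := fun hh => huv (Fin.ext hh)
      have huniq : ∀ q q' : {p : Fin n × Fin n // (p.1:ℕ) < (p.2:ℕ)},
          q.1.1 ∈ T → q.1.2 ∈ T → q'.1.1 ∈ T → q'.1.2 ∈ T → q = q' := by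
        intro q q' hq1 hq2 hq3 hq4
        rw [hTe] at hq1 hq2 hq3 hq4
        simp only [Finset.mem_insert, Finset.mem_singleton] at hq1 hq2 hq3 hq4
        have e1 := q.2
        have e2 := q'.2
        apply Subtype.ext
        have hcoords : q.1.1 = q'.1.1 ∧ q.1.2 = q'.1.2 := by
          rcases hq1 with h1 | h1 <;> rcases hq2 with h2 | h2 <;>
            rcases hq3 with h3 | h3 <;> rcases hq4 with h4 | h4 <;>
            rw [h1, h2] at e1 <;> rw [h3, h4] at e2 <;>
            first
              | exact ⟨h1.trans h3.symm, h2.trans h4.symm⟩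
              | omega
        exact Prod.ext hcoords.1 hcoords.2
      have heq := huniq (φ p1) (φ p2) (hall p1).2.1 (hall p1).2.2 (hall p2).2.1 (hall p2).2.2
      exact hp12 (φ.injective heq)
  -- build the permutation
  have hcard1 : Fintype.card {x // x ∈ T} = Fintype.card {x // x ∈ S} := by
    rw [Fintype.card_coe, Fintype.card_coe]
    exact hcards
  have hcard2 : Fintype.card {x // ¬ x ∈ T} = Fintype.card {x // ¬ x ∈ S} := by
    rw [Fintype.card_subtype_compl, Fintype.card_subtype_compl]
    congr 1
  set e₁ : {x // x ∈ T} ≃ {x // x ∈ S} := Fintype.equivOfCardEq hcard1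
  set e₂ : {x // ¬ x ∈ T} ≃ {x // ¬ x ∈ S} := Fintype.equivOfCardEq hcard2
  set σ : Equiv.Perm (Fin n) := Equiv.subtypeCongr e₁ e₂ with hσdef
  have hσmem : ∀ x, x ∈ T → σ x ∈ S := by
    intro x hx
    have hstep : σ x = (e₁ ⟨x, hx⟩ : Fin n) := by
      simp [hσdef, Equiv.subtypeCongr, hx]
    rw [hstep]
    exact (e₁ ⟨x, hx⟩).2
  have himg : T.image σ = S := by
    apply Finset.eq_of_subset_of_card_le
    · intro y hy
      obtain ⟨x, hx, rfl⟩ := Finset.mem_image.mp hy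
      exact hσmem x hx
    · rw [Finset.card_image_of_injective _ σ.injective, hcards]
  refine ⟨σ, ?_⟩
  intro a
  have hgoal : (f a = true) ↔ (g (a ∘ σ) = true) := by
    rw [hfS, gAnd, ← himg]
    simp only [Finset.forall_mem_image, Function.comp_apply]
  exact Bool.eq_iff_iff.mpr hgoal


lemma const_case {n : ℕ} (hn : 4 ≤ n) (f g : (Fin n → Bool) → Bool)
    (c : Bool) (hfc : ∀ a, f a = c) (hdeck : SameDeck f g) : FnEquiv f g := by
  obtain ⟨φ, hφ⟩ := hdeck
  have key : ∀ q : {p : Fin n × Fin n // (p.1 : ℕ) < (p.2 : ℕ)},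
      ∀ b, idMinor g q.1.1 q.1.2 q.2 b = c := by
    intro q
    obtain ⟨p, rfl⟩ : ∃ p, φ p = q := ⟨φ.symm q, Equiv.apply_symm_apply φ q⟩
    obtain ⟨σ, hσ⟩ := hφ p
    intro b
    have h2 := hσ (b ∘ σ.symm)
    have hb : (b ∘ σ.symm) ∘ σ = b := by funext x; simp
    rw [hb] at h2
    rw [← h2]
    exact hfc _
  refine ⟨Equiv.refl _, ?_⟩
  intro a
  have hcard : Fintype.card Bool < Fintype.card (Fin n) := by
    simp only [Fintype.card_bool, Fintype.card_fin]; omega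
  obtain ⟨i, j, hne, hae⟩ := Fintype.exists_ne_map_eq_of_card_lt a hcard
  have hv : (i:ℕ) ≠ (j:ℕ) := fun hh => hne (Fin.ext hh)
  have main : ∀ (i j : Fin n) (hij : (i:ℕ)<(j:ℕ)), a i = a j → g a = c := by
    intro i j hij hae
    have hg : g a = idMinor g i j hij (a ∘ liftMap j) := by
      unfold idMinor; congr 1; funext t; exact (lift_delta i j hij a hae t).symm
    rw [hg]
    exact key ⟨(i,j), hij⟩ _
  rw [hfc]
  rw [show a ∘ ⇑(Equiv.refl (Fin n)) = a from rfl]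
  rcases lt_or_gt_of_ne hv with hij | hij
  · exact (main i j hij hae).symm
  · exact (main j i hij hae.symm).symm

def dual {n : ℕ} (f : (Fin n → Bool) → Bool) : (Fin n → Bool) → Bool :=
  fun a => !(f (fun i => !(a i)))

lemma dual_dual {n : ℕ} (f : (Fin n → Bool) → Bool) : dual (dual f) = f := by
  funext a; unfold dual; simp

lemma dual_idMinor {n : ℕ} (f : (Fin n → Bool) → Bool) (i j : Fin n) (h : (i:ℕ)<(j:ℕ)) :
    idMinor (dual f) i j h = dual (idMinor f i j h) := rfl

lemma dual_fnEquiv {k : ℕ} {F G : (Fin k → Bool) → Bool} (h : FnEquiv F G) :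
    FnEquiv (dual F) (dual G) := by
  obtain ⟨σ, hσ⟩ := h
  exact ⟨σ, fun a => by unfold dual; rw [hσ]; rfl⟩

lemma dual_sameDeck {n : ℕ} {f g : (Fin n → Bool) → Bool} (h : SameDeck f g) :
    SameDeck (dual f) (dual g) := by
  obtain ⟨φ, hφ⟩ := h
  exact ⟨φ, fun p => by rw [dual_idMinor, dual_idMinor]; exact dual_fnEquiv (hφ p)⟩

lemma fnEquiv_of_dual {n : ℕ} {f g : (Fin n → Bool) → Bool}
    (h : FnEquiv (dual f) (dual g)) : FnEquiv f g := by
  have h2 := dual_fnEquiv h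
  rwa [dual_dual, dual_dual] at h2

end S17

/-- Let `n ≥ 4` and let `f : {0,1}ⁿ → {0,1}` be a Boolean function that is either
constant, or a conjunction `⋀_{i∈S} x_i` for some nonempty `S` (the clone `Λ`), or a
disjunction `⋁_{i∈S} x_i` for some nonempty `S` (the clone `V`). Then `f` is
reconstructible: every `g` with the same deck as `f` is equivalent to `f`. -/
theorem statement17 (n : ℕ) (hn : 4 ≤ n) (f : (Fin n → Bool) → Bool)
    (hf : (∃ c : Bool, ∀ a, f a = c) ∨
          (∃ S : Finset (Fin n), S.Nonempty ∧
            ∀ a, (f a = true ↔ ∀ i ∈ S, a i = true)) ∨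
          (∃ S : Finset (Fin n), S.Nonempty ∧
            ∀ a, (f a = true ↔ ∃ i ∈ S, a i = true)))
    (g : (Fin n → Bool) → Bool) (hdeck : SameDeck f g) :
    FnEquiv f g := by
  rcases hf with ⟨c, hc⟩ | ⟨S, hSne, hSf⟩ | ⟨S, hSne, hSf⟩
  · exact S17.const_case hn f g c hc hdeck
  · exact S17.and_case hn f g S hSne hSf hdeck
  · apply S17.fnEquiv_of_dual
    apply S17.and_case hn (S17.dual f) (S17.dual g) S hSne ?_ (S17.dual_sameDeck hdeck)
    intro a
    show (!(f fun i => !(a i))) = true ↔ _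
    constructor
    · intro hh i hi
      rw [Bool.not_eq_true'] at hh
      by_contra hai
      have hfb : f (fun i => !(a i)) = true :=
        (hSf _).mpr ⟨i, hi, by rw [Bool.eq_false_iff.mpr hai]; rfl⟩
      rw [hfb] at hh
      simp at hh
    · intro hh
      rw [Bool.not_eq_true', Bool.eq_false_iff]
      intro hfb
      obtain ⟨i, hi, hbi⟩ := (hSf _).mp hfb
      rw [hh i hi] at hbi
      simp at hbi
end

section
/- Let (A; ∧, ∨, 0, 1) be a finite bounded distributive lattice and let n ≥ |A| + 2. Call a function h : Aⁿ → A a polynomial operation of A if it satisfies Goodstein's identity: h(x₁,…,xₙ) = ⋁_{I ⊆ {1,…,n}} ( h(e_I) ∧ ⋀_{i∈I} x_i ) for all (x₁,…,xₙ) ∈ Aⁿ, where e_I ∈ Aⁿ is the tuple whose i-th entry is 1 if i ∈ I and 0 otherwise. If f : Aⁿ → A is a polynomial operation of A and g : Aⁿ → A has the same deck as f, then g is a polynomial operation of A. (The class of polynomial operations of A of arity at least |A| + 2 is recognizable.) -/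
/-- `h` is a polynomial operation of the bounded distributive lattice `A` iff it
satisfies Goodstein's identity
`h(x) = ⋁_{I ⊆ {1,…,n}} (h(e_I) ∧ ⋀_{i∈I} x_i)`,
where `e_I` is the characteristic tuple of `I`. -/
def IsLatticePoly {A : Type*} [DistribLattice A] [BoundedOrder A] {n : ℕ}
    (h : (Fin n → A) → A) : Prop :=
  ∀ x : Fin n → A,
    h x = (Finset.univ : Finset (Fin n)).powerset.sup
      (fun I => h (fun i => if i ∈ I then (⊤ : A) else ⊥) ⊓ I.inf x)

section FinAux

/-- The section `σ : {1,…,n−1} → {1,…,n}` skipping the slot `j`. -/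
def secMap {n : ℕ} (j : Fin n) : Fin (n - 1) → Fin n :=
  fun t => if (t : ℕ) < (j : ℕ) then ⟨(t : ℕ), by have := t.isLt; omega⟩
    else ⟨(t : ℕ) + 1, by have := t.isLt; omega⟩

theorem deltaMap_val {n : ℕ} (i j : Fin n) (h : (i : ℕ) < (j : ℕ)) (s : Fin n) :
    ((deltaMap i j h s : Fin (n - 1)) : ℕ) =
      if (s : ℕ) < (j : ℕ) then (s : ℕ)
      else if (s : ℕ) = (j : ℕ) then (i : ℕ) else (s : ℕ) - 1 := by
  simp only [deltaMap]
  split_ifs <;> rfl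

theorem secMap_val {n : ℕ} (j : Fin n) (t : Fin (n - 1)) :
    ((secMap j t : Fin n) : ℕ) = if (t : ℕ) < (j : ℕ) then (t : ℕ) else (t : ℕ) + 1 := by
  simp only [secMap]
  split_ifs <;> rfl

theorem sec_delta_apply {n : ℕ} (i j : Fin n) (h : (i : ℕ) < (j : ℕ)) (s : Fin n) :
    secMap j (deltaMap i j h s) = if s = j then i else s := by
  have hs := s.isLt
  apply Fin.ext
  rw [secMap_val, deltaMap_val, apply_ite (Fin.val)]
  simp only [Fin.ext_iff]
  split_ifs <;> omega

theorem delta_sec {n : ℕ} (i j : Fin n) (h : (i : ℕ) < (j : ℕ)) (t : Fin (n - 1)) :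
    deltaMap i j h (secMap j t) = t := by
  have ht := t.isLt
  apply Fin.ext
  rw [deltaMap_val, secMap_val]
  split_ifs <;> omega

theorem comp_sec_delta {n : ℕ} {B : Type*} (i j : Fin n) (h : (i : ℕ) < (j : ℕ))
    (x : Fin n → B) (hx : x i = x j) (s : Fin n) :
    x (secMap j (deltaMap i j h s)) = x s := by
  rw [sec_delta_apply]
  split_ifs with hs
  · rw [hx, hs]
  · rfl

end FinAux

section LatAux

variable {A : Type*} [DistribLattice A] [BoundedOrder A]

/-- Characteristic tuple of a subset. -/
def ind {m : ℕ} (I : Finset (Fin m)) : Fin m → A := fun i => if i ∈ I then ⊤ else ⊥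

theorem poly_spec {m : ℕ} {h : (Fin m → A) → A} (hh : IsLatticePoly h) (x : Fin m → A) :
    h x = (Finset.univ : Finset (Fin m)).powerset.sup (fun I => h (ind I) ⊓ I.inf x) := hh x

theorem ind_mono {m : ℕ} {I J : Finset (Fin m)} (h : I ⊆ J) : (ind I : Fin m → A) ≤ ind J := by
  intro t
  by_cases ht : t ∈ I
  · simp [ind, ht, h ht]
  · simp [ind, ht]

theorem inf_ind_of_subset {m : ℕ} {I J : Finset (Fin m)} (h : I ⊆ J) :
    I.inf (ind (A := A) J) = ⊤ :=
  le_antisymm le_top (Finset.le_inf fun i hi => by simp [ind, h hi])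

theorem inf_ind_of_not_subset {m : ℕ} {I J : Finset (Fin m)} (h : ¬ I ⊆ J) :
    I.inf (ind (A := A) J) = ⊥ := by
  obtain ⟨i, hiI, hiJ⟩ := Finset.not_subset.mp h
  exact le_bot_iff.mp (le_trans (Finset.inf_le hiI) (by simp [ind, hiJ]))

theorem poly_term_le {m : ℕ} {h : (Fin m → A) → A} (hh : IsLatticePoly h)
    (I : Finset (Fin m)) (x : Fin m → A) : h (ind I) ⊓ I.inf x ≤ h x := by
  rw [poly_spec hh x]
  exact Finset.le_sup (f := fun I => h (ind I) ⊓ I.inf x)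
    (Finset.mem_powerset.mpr (Finset.subset_univ I))

theorem poly_coef_mono {m : ℕ} {h : (Fin m → A) → A} (hh : IsLatticePoly h)
    {I J : Finset (Fin m)} (hIJ : I ⊆ J) : h (ind I) ≤ h (ind J) := by
  have h1 := poly_term_le hh I (ind (A := A) J)
  rwa [inf_ind_of_subset hIJ, inf_top_eq] at h1

theorem poly_mono {m : ℕ} {h : (Fin m → A) → A} (hh : IsLatticePoly h)
    {x y : Fin m → A} (hxy : x ≤ y) : h x ≤ h y := by
  rw [poly_spec hh x]
  apply Finset.sup_le
  intro I _
  exact le_trans (inf_le_inf_left _ (Finset.inf_mono_fun fun i _ => hxy i)) (poly_term_le hh I y)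

theorem poly_comp {m k : ℕ} (h : (Fin m → A) → A) (hh : IsLatticePoly h)
    (τ : Fin m → Fin k) : IsLatticePoly (fun a => h (a ∘ τ)) := by
  intro x
  show h (x ∘ τ) = _
  apply le_antisymm
  · rw [poly_spec hh (x ∘ τ)]
    apply Finset.sup_le
    intro I _
    refine le_trans ?_
      (Finset.le_sup (Finset.mem_powerset.mpr (Finset.subset_univ (I.image τ))))
    show h (ind I) ⊓ I.inf (x ∘ τ) ≤ h ((ind (I.image τ)) ∘ τ) ⊓ (I.image τ).inf x
    rw [Finset.inf_image]
    refine inf_le_inf ?_ le_rfl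
    have h1 : (ind (A := A) (I.image τ)) ∘ τ =
        ind (Finset.univ.filter (fun i => τ i ∈ I.image τ)) := by
      funext t; simp [ind, Function.comp]
    rw [h1]
    exact poly_coef_mono hh
      (fun t ht => Finset.mem_filter.mpr ⟨Finset.mem_univ t, Finset.mem_image_of_mem τ ht⟩)
  · apply Finset.sup_le
    intro J _
    show h ((ind (A := A) J) ∘ τ) ⊓ J.inf x ≤ h (x ∘ τ)
    have h1 : (ind (A := A) J) ∘ τ = ind (Finset.univ.filter (fun i => τ i ∈ J)) := by
      funext t; simp [ind, Function.comp]
    rw [h1, poly_spec hh, Finset.sup_inf_distrib_right]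
    apply Finset.sup_le
    intro I _
    by_cases hsub : I ⊆ Finset.univ.filter (fun i => τ i ∈ J)
    · rw [inf_ind_of_subset hsub, inf_top_eq]
      refine le_trans (inf_le_inf_left _ ?_) (poly_term_le hh I (x ∘ τ))
      exact Finset.le_inf fun t ht => Finset.inf_le (Finset.mem_filter.mp (hsub ht)).2
    · rw [inf_ind_of_not_subset hsub, inf_bot_eq]
      simp

theorem poly_of_fnEquiv {k : ℕ} {h h' : (Fin k → A) → A} (he : FnEquiv h h')
    (hh : IsLatticePoly h) : IsLatticePoly h' := by
  obtain ⟨σ, hσ⟩ := he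
  have e : h' = fun b => h (b ∘ ⇑σ.symm) := by
    funext b
    rw [hσ (b ∘ ⇑σ.symm)]
    congr 1
    funext t
    simp
  rw [e]
  exact poly_comp h hh _

end LatAux

theorem main_key {A : Type*} [Fintype A] [DistribLattice A] [BoundedOrder A] {n : ℕ}
    (hn : Fintype.card A + 2 ≤ n) (hA : 2 ≤ Fintype.card A)
    (g : (Fin n → A) → A)
    (hgm : ∀ (i j : Fin n) (hij : (i : ℕ) < (j : ℕ)), IsLatticePoly (idMinor g i j hij)) :
    IsLatticePoly g := by
  classical
  -- single-step monotonicity of `g` on characteristic tuples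
  have hmono : ∀ (K : Finset (Fin n)) (s : Fin n), s ∉ K →
      g (ind K) ≤ g (ind (insert s K)) := by
    intro K s hs
    have key : ∀ (i j : Fin n), (i : ℕ) < (j : ℕ) → i ≠ s → j ≠ s → (i ∈ K ↔ j ∈ K) →
        g (ind K) ≤ g (ind (insert s K)) := by
      intro i j hij his hjs hK
      have hK' : i ∈ insert s K ↔ j ∈ insert s K := by
        simp [Finset.mem_insert, his, hjs, hK]
      have e1 : g (ind K) = idMinor g i j hij ((ind K) ∘ secMap j) :=
        (congrArg g (funext (comp_sec_delta i j hij (ind K) (if_congr hK rfl rfl)))).symm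
      have e2 : g (ind (insert s K)) =
          idMinor g i j hij ((ind (insert s K)) ∘ secMap j) :=
        (congrArg g (funext (comp_sec_delta i j hij (ind (insert s K))
          (if_congr hK' rfl rfl)))).symm
      rw [e1, e2]
      exact poly_mono (hgm i j hij)
        (fun t => ind_mono (Finset.subset_insert s K) (secMap j t))
    have hlt : Fintype.card Bool < Fintype.card {t : Fin n // t ≠ s} := by
      have h1 : Fintype.card {t : Fin n // t ≠ s} = n - 1 := by
        simp [Fintype.card_subtype_compl]
      rw [h1, Fintype.card_bool]
      omega
    obtain ⟨a, b, hab, heq⟩ := Fintype.exists_ne_map_eq_of_card_lt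
      (fun t : {t : Fin n // t ≠ s} => decide ((t : Fin n) ∈ K)) hlt
    have hmem : ((a : Fin n) ∈ K ↔ (b : Fin n) ∈ K) := by
      simpa using heq
    have hvne : ((a : Fin n) : ℕ) ≠ ((b : Fin n) : ℕ) :=
      fun e => hab (Subtype.ext (Fin.ext e))
    rcases lt_or_gt_of_ne hvne with h' | h'
    · exact key a b h' a.2 b.2 hmem
    · exact key b a h' b.2 a.2 hmem.symm
  intro x
  obtain ⟨a, b, hab, hxab⟩ := Fintype.exists_ne_map_eq_of_card_lt x
    (by rw [Fintype.card_fin]; omega)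
  have main : ∀ (i j : Fin n), ((i : ℕ) < (j : ℕ)) → x i = x j →
      g x = (Finset.univ : Finset (Fin n)).powerset.sup
        (fun K => g (ind K) ⊓ K.inf x) := by
    intro i j hij hx
    set KK : Finset (Fin (n - 1)) → Finset (Fin n) :=
      fun J => Finset.univ.filter (fun s => deltaMap i j hij s ∈ J) with hKK
    have hgx : g x = (Finset.univ : Finset (Fin (n - 1))).powerset.sup
        (fun J => g (ind (KK J)) ⊓ (KK J).inf x) := by
      have e0 : g x = idMinor g i j hij (x ∘ secMap j) :=
        (congrArg g (funext (comp_sec_delta i j hij x hx))).symm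
      rw [e0, poly_spec (hgm i j hij)]
      apply Finset.sup_congr rfl
      intro J _
      have e1 : (ind (A := A) J) ∘ deltaMap i j hij = ind (KK J) := by
        funext t; simp [ind, hKK, Finset.mem_filter]
      have e2 : idMinor g i j hij (ind J) = g (ind (KK J)) := congrArg g e1
      rw [e2]
      congr 1
      apply le_antisymm
      · apply Finset.le_inf
        intro s hs
        have hδ : deltaMap i j hij s ∈ J := (Finset.mem_filter.mp hs).2
        calc J.inf (x ∘ secMap j) ≤ (x ∘ secMap j) (deltaMap i j hij s) := Finset.inf_le hδ
          _ = x s := comp_sec_delta i j hij x hx s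
      · apply Finset.le_inf
        intro t ht
        refine Finset.inf_le ?_
        simp [hKK, Finset.mem_filter, delta_sec, ht]
    have hcompat : ∀ K : Finset (Fin n), (i ∈ K ↔ j ∈ K) →
        g (ind K) ⊓ K.inf x ≤ g x := by
      intro K hc
      rw [hgx]
      have hKJ : KK (Finset.univ.filter (fun t => secMap j t ∈ K)) = K := by
        ext s
        simp only [hKK, Finset.mem_filter, Finset.mem_univ, true_and]
        rw [sec_delta_apply]
        by_cases hs : s = j
        · simp only [if_pos hs, hs]
          exact hc
        · simp [hs]
      have hle := Finset.le_sup (f := fun J => g (ind (A := A) (KK J)) ⊓ (KK J).inf x)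
        (Finset.mem_powerset.mpr
          (Finset.subset_univ (Finset.univ.filter (fun t => secMap j t ∈ K))))
      simpa only [hKJ] using hle
    apply le_antisymm
    · rw [hgx]
      apply Finset.sup_le
      intro J _
      exact Finset.le_sup (f := fun K => g (ind (A := A) K) ⊓ K.inf x)
        (Finset.mem_powerset.mpr (Finset.subset_univ (KK J)))
    · apply Finset.sup_le
      intro K _
      by_cases hiK : i ∈ K <;> by_cases hjK : j ∈ K
      · exact hcompat K (by tauto)
      · have h1 : K.inf x ≤ x j := le_trans (Finset.inf_le hiK) (le_of_eq hx)
        refine le_trans ?_ (hcompat (insert j K) (by simp [Finset.mem_insert, hiK]))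
        refine inf_le_inf (hmono K j hjK) ?_
        rw [Finset.inf_insert]
        exact le_inf h1 le_rfl
      · have h1 : K.inf x ≤ x i := le_trans (Finset.inf_le hjK) (le_of_eq hx.symm)
        refine le_trans ?_ (hcompat (insert i K) (by simp [Finset.mem_insert, hjK]))
        refine inf_le_inf (hmono K i hiK) ?_
        rw [Finset.inf_insert]
        exact le_inf h1 le_rfl
      · exact hcompat K (by tauto)
  have hvne : ((a : ℕ)) ≠ (b : ℕ) := fun e => hab (Fin.ext e)
  rcases lt_or_gt_of_ne hvne with h' | h'
  · exact main a b h' hxab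
  · exact main b a h' hxab.symm

/-- Let `A` be a finite bounded distributive lattice and `n ≥ |A| + 2`. If
`f : Aⁿ → A` is a polynomial operation of `A` (in the sense of Goodstein's identity)
and `g : Aⁿ → A` has the same deck as `f`, then `g` is a polynomial operation of `A`:
the class of polynomial operations of `A` of arity at least `|A| + 2` is recognizable. -/
theorem statement18 {A : Type*} [Fintype A] [DistribLattice A] [BoundedOrder A]
    (n : ℕ) (hn : Fintype.card A + 2 ≤ n)
    (f g : (Fin n → A) → A) (hf : IsLatticePoly f) (hdeck : SameDeck f g) :
    IsLatticePoly g := by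
  rcases subsingleton_or_nontrivial A with hA | hA
  · intro x
    exact Subsingleton.elim _ _
  obtain ⟨φ, hφ⟩ := hdeck
  have hgm : ∀ (i j : Fin n) (hij : (i : ℕ) < (j : ℕ)), IsLatticePoly (idMinor g i j hij) := by
    have gen : ∀ q : {p : Fin n × Fin n // (p.1 : ℕ) < (p.2 : ℕ)},
        IsLatticePoly (idMinor g q.1.1 q.1.2 q.2) := by
      intro q
      obtain ⟨p, rfl⟩ := φ.surjective q
      exact poly_of_fnEquiv (hφ p) (poly_comp f hf _)
    intro i j hij
    exact gen ⟨(i, j), hij⟩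
  exact main_key hn Fintype.one_lt_card g hgm
end
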